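/- arXiv:2509.17541 — 8 statements merged into one kernel-verified Lean document; each statement's English description precedes it below -/
import Mathlib

section
/- Let A, B, C, D ⊆ {1,…,n} be four pairwise distinct subsets. If some index i ∈ {1,…,n} is contained in exactly 1 or exactly 3 of the sets A, B, C, D, then the convex hull of the characteristic vectors χ_A, χ_B, χ_C, χ_D in ℝ^n has affine dimension 3. -/
open Set

namespace Paper

variable {P : Type*}

/-- The characteristic vector of a subset of `P`, as an element of `ℝ^P`. -/
noncomputable def chi (W : Set P) : P → ℝ := W.indicator 1

/-- A subset `S` of a poset is connected if it is non-empty and any two of its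
elements are joined by a finite sequence inside `S` of consecutively comparable
elements. -/
def ConnSub [PartialOrder P] (S : Set P) : Prop :=
  S.Nonempty ∧ ∀ x ∈ S, ∀ y ∈ S,
    Relation.ReflTransGen (fun a b : P => a ∈ S ∧ b ∈ S ∧ (a ≤ b ∨ b ≤ a)) x y

/-- Up-closure `⟨S⟩↑` of a subset of a poset. -/
def upCl [PartialOrder P] (S : Set P) : Set P := {y | ∃ x ∈ S, x ≤ y}

/-- Down-closure `⟨S⟩↓` of a subset of a poset. -/
def dnCl [PartialOrder P] (S : Set P) : Set P := {y | ∃ x ∈ S, y ≤ x}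

/-- Minimal elements of a subset of a poset. -/
def minOf [PartialOrder P] (S : Set P) : Set P := {x | x ∈ S ∧ ∀ y ∈ S, y ≤ x → y = x}

/-- Maximal elements of a subset of a poset. -/
def maxOf [PartialOrder P] (S : Set P) : Set P := {x | x ∈ S ∧ ∀ y ∈ S, x ≤ y → x = y}

/-- `A ∥ B` : every element of `A` is incomparable to every element of `B`. -/
def IsParallel [PartialOrder P] (A B : Set P) : Prop :=
  ∀ a ∈ A, ∀ b ∈ B, ¬ a ≤ b ∧ ¬ b ≤ a

/-- Order-convexity of a subset of a poset. -/
def OrdConvex [PartialOrder P] (Q : Set P) : Prop :=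
  ∀ ⦃x y z : P⦄, x ∈ Q → z ∈ Q → x ≤ y → y ≤ z → y ∈ Q

/-- A poset is `X`-free if it contains no five elements `d₁, d₂ < e < u₁, u₂` with
`d₁ ∥ d₂` and `u₁ ∥ u₂`. -/
def XFree (P : Type*) [PartialOrder P] : Prop :=
  ¬ ∃ d₁ d₂ e u₁ u₂ : P, d₁ < e ∧ d₂ < e ∧ e < u₁ ∧ e < u₂ ∧
      ¬ d₁ ≤ d₂ ∧ ¬ d₂ ≤ d₁ ∧ ¬ u₁ ≤ u₂ ∧ ¬ u₂ ≤ u₁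

/-- The order polytope of a poset. -/
def orderPolytope (P : Type*) [PartialOrder P] : Set (P → ℝ) :=
  {x | (∀ p : P, 0 ≤ x p ∧ x p ≤ 1) ∧ ∀ p q : P, p ≤ q → x p ≤ x q}

/-- The chain polytope of a finite poset. -/
def chainPolytope (P : Type*) [Fintype P] [PartialOrder P] : Set (P → ℝ) :=
  {x | (∀ p : P, 0 ≤ x p) ∧
       ∀ c : Finset P, IsChain (· ≤ ·) (↑c : Set P) → ∑ p ∈ c, x p ≤ 1}

/-- The dimension of a subset of a real vector space: the dimension of its affine span. -/
noncomputable def sdim {V : Type*} [AddCommGroup V] [Module ℝ V] (s : Set V) : ℕ :=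
  Module.finrank ℝ (vectorSpan ℝ s)

/-- `F` is a face of the polytope `K`. -/
def IsFaceOf {V : Type*} [AddCommGroup V] [Module ℝ V] (K F : Set V) : Prop :=
  IsExtreme ℝ K F

/-- `T` is a triangular 2-dimensional face of `K`. -/
def IsTriangleFaceOf {V : Type*} [AddCommGroup V] [Module ℝ V] (K T : Set V) : Prop :=
  IsFaceOf K T ∧ sdim T = 2 ∧ (Set.extremePoints ℝ T).ncard = 3

/-- `T` is a square 2-dimensional face of `K`. -/
def IsSquareFaceOf {V : Type*} [AddCommGroup V] [Module ℝ V] (K T : Set V) : Prop :=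
  IsFaceOf K T ∧ sdim T = 2 ∧ (Set.extremePoints ℝ T).ncard = 4

/-- `T` is a 2-dimensional face of `K`. -/
def IsTwoFaceOf {V : Type*} [AddCommGroup V] [Module ℝ V] (K T : Set V) : Prop :=
  IsFaceOf K T ∧ sdim T = 2

end Paper

open Paper

/-- The characteristic vector of a finite subset of `{1, …, n}`. -/
def chiF {n : ℕ} (W : Finset (Fin n)) : Fin n → ℝ := fun i => if i ∈ W then 1 else 0

private lemma aux3 {n : ℕ} (B C D : Finset (Fin n)) (hBC : B ≠ C) (hBD : B ≠ D)
    (u v t : ℝ) (hsum : u + v + t = 0)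
    (heq : ∀ p, u * chiF B p + v * chiF C p + t * chiF D p = 0) : u = 0 := by
  by_contra hu
  obtain ⟨p0, hp0⟩ : ∃ p, ¬ (p ∈ B ↔ p ∈ D) := by
    by_contra h
    push_neg at h
    exact hBD (Finset.ext fun p => (h p))
  have key : t = 0 ∧ v = -u := by
    have h0 := heq p0
    by_cases hb : p0 ∈ B <;> by_cases hc : p0 ∈ C <;> by_cases hd : p0 ∈ D <;>
      simp only [chiF, hb, hc, hd, if_true, if_false, mul_one, mul_zero, add_zero,
        zero_add] at h0 <;>
      first
        | tauto
        | (exfalso; apply hu; linarith)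
        | (constructor <;> linarith)
  obtain ⟨ht, hv⟩ := key
  obtain ⟨p1, hp1⟩ : ∃ p, ¬ (p ∈ B ↔ p ∈ C) := by
    by_contra h
    push_neg at h
    exact hBC (Finset.ext fun p => (h p))
  have h1 := heq p1
  by_cases hb : p1 ∈ B <;> by_cases hc : p1 ∈ C <;>
    simp only [chiF, hb, hc, ht, if_true, if_false, mul_one, mul_zero, add_zero,
      zero_add, zero_mul] at h1 <;>
    first
      | tauto
      | (exfalso; apply hu; linarith)

private lemma aux3' {n : ℕ} (B C D : Finset (Fin n)) (hBC : B ≠ C) (hBD : B ≠ D)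
    (hCD : C ≠ D) (u v t : ℝ) (hsum : u + v + t = 0)
    (heq : ∀ p, u * chiF B p + v * chiF C p + t * chiF D p = 0) :
    u = 0 ∧ v = 0 ∧ t = 0 :=
  ⟨aux3 B C D hBC hBD u v t hsum heq,
   aux3 C B D hBC.symm hCD v u t (by linarith) (fun p => by linarith [heq p]),
   aux3 D B C hBD.symm hCD.symm t u v (by linarith) (fun p => by linarith [heq p])⟩

/-- If `A, B, C, D ⊆ {1,…,n}` are pairwise distinct and some index `i`
belongs to exactly 1 or exactly 3 of them, then the convex hull of their characteristic
vectors has affine dimension 3. -/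
theorem statement4 (n : ℕ) (A B C D : Finset (Fin n))
    (hAB : A ≠ B) (hAC : A ≠ C) (hAD : A ≠ D) (hBC : B ≠ C) (hBD : B ≠ D) (hCD : C ≠ D)
    (i : Fin n)
    (hi : ((if i ∈ A then 1 else 0) + (if i ∈ B then 1 else 0) +
            (if i ∈ C then 1 else 0) + (if i ∈ D then 1 else 0) : ℕ) = 1 ∨
          ((if i ∈ A then 1 else 0) + (if i ∈ B then 1 else 0) +
            (if i ∈ C then 1 else 0) + (if i ∈ D then 1 else 0) : ℕ) = 3) :
    sdim (convexHull ℝ ({chiF A, chiF B, chiF C, chiF D} : Set (Fin n → ℝ))) = 3 := by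
  have hind : AffineIndependent ℝ ![chiF A, chiF B, chiF C, chiF D] := by
    rw [affineIndependent_iff]
    intro s w hw hwv
    -- extend w by zero outside s
    set w' : Fin 4 → ℝ := fun e => if e ∈ s then w e else 0 with hw'def
    have hsub : s ⊆ Finset.univ := Finset.subset_univ s
    have hsum' : ∑ e, w' e = 0 := by
      rw [← Finset.sum_subset hsub (fun e _ he => by simp [w', he])]
      simpa [w'] using hw
    have hwv' : ∑ e, w' e • ![chiF A, chiF B, chiF C, chiF D] e = 0 := by
      rw [← Finset.sum_subset hsub (fun e _ he => by simp [w', he])]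
      rw [← hwv]
      exact Finset.sum_congr rfl fun e he => by simp [w', he]
    suffices hall : ∀ e, w' e = 0 by
      intro e he
      have := hall e
      simpa [w', he] using this
    have hq : ∀ q, w' 0 * chiF A q + w' 1 * chiF B q + w' 2 * chiF C q + w' 3 * chiF D q
        = 0 := by
      intro q
      have := congrFun hwv' q
      simpa [Fin.sum_univ_four] using this
    have hsum4 : w' 0 + w' 1 + w' 2 + w' 3 = 0 := by
      simpa [Fin.sum_univ_four] using hsum'
    -- from the parity coordinate, one weight vanishes
    have hzero : w' 0 = 0 ∨ w' 1 = 0 ∨ w' 2 = 0 ∨ w' 3 = 0 := by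
      have h0 := hq i
      by_cases hA : i ∈ A <;> by_cases hB : i ∈ B <;> by_cases hC : i ∈ C <;>
        by_cases hD : i ∈ D <;>
        simp only [hA, hB, hC, hD, if_true, if_false] at hi <;>
        simp only [chiF, hA, hB, hC, hD, if_true, if_false, mul_one, mul_zero,
          add_zero, zero_add] at h0 <;>
        first
          | omega
          | (left; linarith)
          | (right; left; linarith)
          | (right; right; left; linarith)
          | (right; right; right; linarith)
    have hfin : w' 0 = 0 ∧ w' 1 = 0 ∧ w' 2 = 0 ∧ w' 3 = 0 := by
      rcases hzero with h | h | h | h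
      · obtain ⟨h1, h2, h3⟩ := aux3' B C D hBC hBD hCD (w' 1) (w' 2) (w' 3)
          (by linarith) (fun p => by have := hq p; rw [h] at this; linarith)
        exact ⟨h, h1, h2, h3⟩
      · obtain ⟨h1, h2, h3⟩ := aux3' A C D hAC hAD hCD (w' 0) (w' 2) (w' 3)
          (by linarith) (fun p => by have := hq p; rw [h] at this; linarith)
        exact ⟨h1, h, h2, h3⟩
      · obtain ⟨h1, h2, h3⟩ := aux3' A B D hAB hAD hBD (w' 0) (w' 1) (w' 3)
          (by linarith) (fun p => by have := hq p; rw [h] at this; linarith)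
        exact ⟨h1, h2, h, h3⟩
      · obtain ⟨h1, h2, h3⟩ := aux3' A B C hAB hAC hBC (w' 0) (w' 1) (w' 2)
          (by linarith) (fun p => by have := hq p; rw [h] at this; linarith)
        exact ⟨h1, h2, h3, h⟩
    intro e
    fin_cases e <;> simp [hfin.1, hfin.2.1, hfin.2.2.1, hfin.2.2.2]
  have hr : (Set.range ![chiF A, chiF B, chiF C, chiF D] : Set (Fin n → ℝ))
      = {chiF A, chiF B, chiF C, chiF D} := by
    ext y; simp [Matrix.range_cons, Matrix.range_empty]; tauto
  have := hind.finrank_vectorSpan (n := 3) (by simp)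
  rw [hr] at this
  rw [sdim, ← direction_affineSpan, affineSpan_convexHull, direction_affineSpan]
  exact this
end

section
/- Let A, B, C, D ⊆ {1,…,n} be four pairwise distinct subsets such that S = conv(χ_A, χ_B, χ_C, χ_D) is a square (a 2-dimensional polytope with exactly these four points as vertices) whose diagonals are the segments conv(χ_A, χ_D) and conv(χ_B, χ_C). Then χ_A + χ_D = χ_B + χ_C; in particular A ∩ D = B ∩ C and A ∪ D = B ∪ C. -/
/-!
Four points in convex position spanning a plane satisfy an affine relation
`a χ_A + b χ_B + c χ_C + d χ_D = 0`, `a + b + c + d = 0`, in which exactly two coefficients are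
positive: a point whose coefficient has the opposite sign to all others would be a convex
combination of them, hence not a vertex. Read coordinatewise on `0/1`-vectors, such a relation
with positive pair `{U, V}` and negative pair `{W, Z}` forces `χ_U + χ_V = χ_W + χ_Z`, so the
square is a parallelogram with diagonals `UV` and `WZ`. Its sides are faces (cut out by a linear
functional vanishing along the side), so the non-face `conv(χ_A, χ_D)` must be a diagonal.
-/

open Set

open Paper

open Module

lemma sign_pattern_of_not_lone {a b c d : ℝ}
    (hne : ¬(a = 0 ∧ b = 0 ∧ c = 0 ∧ d = 0)) (ha₀ : 0 ≤ a)
    (ha : (b ≤ 0 ∧ c ≤ 0 ∧ d ≤ 0) ∨ (0 ≤ b ∧ 0 ≤ c ∧ 0 ≤ d) → a = 0)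
    (hb : (a ≤ 0 ∧ c ≤ 0 ∧ d ≤ 0) ∨ (0 ≤ a ∧ 0 ≤ c ∧ 0 ≤ d) → b = 0)
    (hc : (a ≤ 0 ∧ b ≤ 0 ∧ d ≤ 0) ∨ (0 ≤ a ∧ 0 ≤ b ∧ 0 ≤ d) → c = 0)
    (hd : (a ≤ 0 ∧ b ≤ 0 ∧ c ≤ 0) ∨ (0 ≤ a ∧ 0 ≤ b ∧ 0 ≤ c) → d = 0) :
    0 < a ∧ ((0 < d ∧ b < 0 ∧ c < 0) ∨ (0 < b ∧ c < 0 ∧ d < 0) ∨ (0 < c ∧ b < 0 ∧ d < 0)) := by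
  grind

lemma add_eq_add_of_zero_one {x y z t a b c d : ℝ} (hx : x = 0 ∨ x = 1) (hy : y = 0 ∨ y = 1)
    (hz : z = 0 ∨ z = 1) (ht : t = 0 ∨ t = 1) (ha : 0 < a) (hd : 0 < d) (hb : b < 0)
    (hc : c < 0) (hsum : a + b + c + d = 0) (h : a * x + b * y + c * z + d * t = 0) :
    x + t = y + z := by
  rcases hx with rfl | rfl <;> rcases hy with rfl | rfl <;> rcases hz with rfl | rfl <;>
    rcases ht with rfl | rfl <;> linarith

section ConvexPosition

variable {E : Type*} [AddCommGroup E] [Module ℝ E]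

lemma exists_affine_relation_of_finrank_vectorSpan_le_two {x y z t : E}
    (h : finrank ℝ (vectorSpan ℝ {x, y, z, t}) ≤ 2) :
    ∃ a b c d : ℝ, ¬(a = 0 ∧ b = 0 ∧ c = 0 ∧ d = 0) ∧ a + b + c + d = 0 ∧
      a • x + b • y + c • z + d • t = 0 := by
  have hrange : range ![x, y, z, t] = {x, y, z, t} := by
    ext p; simp [Matrix.range_cons]; tauto
  have hdep : ¬AffineIndependent ℝ ![x, y, z, t] := by
    rwa [← finrank_vectorSpan_le_iff_not_affineIndependent ℝ _ (n := 2) rfl, hrange]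
  simp only [affineIndependent_iff_of_fintype, not_forall] at hdep
  obtain ⟨w, hw, hwp, i, hwi⟩ := hdep
  rw [Finset.weightedVSub_eq_linear_combination _ hw] at hwp
  simp only [Fin.sum_univ_four, Matrix.cons_val] at hw hwp
  refine ⟨w 0, w 1, w 2, w 3, fun h0 => hwi ?_, hw, hwp⟩
  fin_cases i <;> simp [h0]

lemma eq_zero_of_affine_relation_of_mem_extremePoints {K : Set E} (hK : Convex ℝ K)
    {x y z t : E} (hx : x ∈ K.extremePoints ℝ) (hy : y ∈ K) (hz : z ∈ K) (ht : t ∈ K)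
    (hxy : x ≠ y) (hxz : x ≠ z) (hxt : x ≠ t) {a b c d : ℝ} (hsum : a + b + c + d = 0)
    (h : a • x + b • y + c • z + d • t = 0)
    (hsign : (b ≤ 0 ∧ c ≤ 0 ∧ d ≤ 0) ∨ (0 ≤ b ∧ 0 ≤ c ∧ 0 ≤ d)) : a = 0 := by
  wlog hneg : b ≤ 0 ∧ c ≤ 0 ∧ d ≤ 0 generalizing a b c d
  · obtain ⟨hb, hc, hd⟩ := hsign.resolve_left hneg
    refine neg_eq_zero.1 <| this (a := -a) (b := -b) (c := -c) (d := -d) (by linarith)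
      (by linear_combination (norm := module) -h) (Or.inl ?_) ?_ <;>
    exact ⟨by linarith, by linarith, by linarith⟩
  obtain ⟨hb, hc, hd⟩ := hneg
  by_contra ha
  have ha' : 0 < a := lt_of_le_of_ne (by linarith) (Ne.symm ha)
  have hmem : x ∈ convexHull ℝ {y, z, t} := by
    have := (convex_convexHull ℝ ({y, z, t} : Set E)).sum_mem (t := Finset.univ)
      (w := ![-b / a, -c / a, -d / a]) (z := ![y, z, t]) ?_ ?_ ?_
    · convert this using 1
      simp only [Fin.sum_univ_three, Matrix.cons_val]
      rw [← smul_right_inj ha]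
      linear_combination (norm := skip) h
      match_scalars <;> field_simp <;> ring
    · intro i _; fin_cases i <;> exact div_nonneg (by simpa) ha'.le
    · simp [Fin.sum_univ_three]; field_simp; linarith
    · intro i _; fin_cases i <;> exact subset_convexHull ℝ _ (by simp)
  have hyzt : convexHull ℝ {y, z, t} ⊆ K :=
    convexHull_min (by rintro p (rfl | rfl | rfl) <;> assumption) hK
  have := extremePoints_convexHull_subset
    (inter_extremePoints_subset_extremePoints_of_subset hyzt ⟨hmem, hx⟩)
  rcases this with rfl | rfl | rfl <;> simp_all

lemma exists_affine_relation_two_pos_two_neg {x y z t : E}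
    (hxy : x ≠ y) (hxz : x ≠ z) (hxt : x ≠ t) (hyz : y ≠ z) (hyt : y ≠ t) (hzt : z ≠ t)
    (hext : {x, y, z, t} ⊆ (convexHull ℝ {x, y, z, t}).extremePoints ℝ)
    (hdim : finrank ℝ (vectorSpan ℝ {x, y, z, t}) ≤ 2) :
    ∃ a b c d : ℝ, a + b + c + d = 0 ∧ a • x + b • y + c • z + d • t = 0 ∧ 0 < a ∧
      ((0 < d ∧ b < 0 ∧ c < 0) ∨ (0 < b ∧ c < 0 ∧ d < 0) ∨ (0 < c ∧ b < 0 ∧ d < 0)) := by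
  obtain ⟨a, b, c, d, hne, hsum, h⟩ := exists_affine_relation_of_finrank_vectorSpan_le_two hdim
  wlog ha : 0 ≤ a generalizing a b c d
  · exact this (-a) (-b) (-c) (-d) (by simpa using hne) (by linarith)
      (by linear_combination (norm := module) -h) (by linarith)
  set K := convexHull ℝ {x, y, z, t}
  have hK : Convex ℝ K := convex_convexHull ℝ _
  have hmem : ∀ p ∈ ({x, y, z, t} : Set E), p ∈ K := fun p hp => subset_convexHull ℝ _ hp
  refine ⟨a, b, c, d, hsum, h, sign_pattern_of_not_lone hne ha ?_ ?_ ?_ ?_⟩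
  · exact eq_zero_of_affine_relation_of_mem_extremePoints hK (hext (by simp)) (hmem y (by simp))
      (hmem z (by simp)) (hmem t (by simp)) hxy hxz hxt hsum h
  · exact eq_zero_of_affine_relation_of_mem_extremePoints hK (hext (by simp)) (hmem x (by simp))
      (hmem z (by simp)) (hmem t (by simp)) hxy.symm hyz hyt (by linarith)
      (by linear_combination (norm := module) h)
  · exact eq_zero_of_affine_relation_of_mem_extremePoints hK (hext (by simp)) (hmem x (by simp))
      (hmem y (by simp)) (hmem t (by simp)) hxz.symm hyz.symm hzt (by linarith)
      (by linear_combination (norm := module) h)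
  · exact eq_zero_of_affine_relation_of_mem_extremePoints hK (hext (by simp)) (hmem x (by simp))
      (hmem y (by simp)) (hmem z (by simp)) hxt.symm hyt.symm hzt.symm (by linarith)
      (by linear_combination (norm := module) h)

lemma isExtreme_setOf_eq_of_forall_le {K : Set E} (f : E →ₗ[ℝ] ℝ) {c : ℝ}
    (hK : ∀ p ∈ K, f p ≤ c) : IsExtreme ℝ K {p ∈ K | f p = c} := by
  refine ⟨fun p hp => hp.1, ?_⟩
  rintro p₁ hp₁ p₂ hp₂ p ⟨-, hpc⟩ ⟨α, β, hα, hβ, hαβ, rfl⟩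
  simp only [map_add, map_smul, smul_eq_mul] at hpc
  have h₁ := mul_nonneg hα.le (sub_nonneg.2 (hK p₁ hp₁))
  have h₂ := mul_nonneg hβ.le (sub_nonneg.2 (hK p₂ hp₂))
  have hsum : α * (c - f p₁) + β * (c - f p₂) = 0 := by linear_combination c * hαβ - hpc
  have e₁ := (mul_eq_zero.1 (by linarith : α * (c - f p₁) = 0)).resolve_left hα.ne'
  exact ⟨hp₁, by linarith⟩

lemma isExtreme_segment_of_lt {f : E →ₗ[ℝ] ℝ} {x y z t : E} (ht : f t = f x)
    (hy : f y < f x) (hz : f z < f x) :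
    IsExtreme ℝ (convexHull ℝ {x, y, z, t}) (segment ℝ x t) := by
  have hK : convexHull ℝ {x, y, z, t} = convexJoin ℝ (segment ℝ x t) (segment ℝ y z) := by
    rw [← convexHull_pair, ← convexHull_pair, ← convexHull_union (by simp) (by simp)]
    congr 1
    ext p; simp; tauto
  have hxt : segment ℝ x t ⊆ f ⁻¹' {f x} :=
    (convex_singleton _).linear_preimage f |>.segment_subset rfl ht
  have hyz : segment ℝ y z ⊆ f ⁻¹' Iio (f x) :=
    (convex_Iio _).linear_preimage f |>.segment_subset hy hz
  have hle : ∀ p ∈ convexHull ℝ {x, y, z, t}, f p ≤ f x := by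
    refine fun p hp => convexHull_min ?_ ((convex_Iic (f x)).linear_preimage f) hp
    rintro q (rfl | rfl | rfl | rfl)
    exacts [le_refl (f q), hy.le, hz.le, ht.le]
  convert isExtreme_setOf_eq_of_forall_le f hle using 1
  ext p
  constructor
  · intro hp
    exact ⟨hK ▸ subset_convexJoin_left ⟨y, left_mem_segment ℝ y z⟩ hp, hxt hp⟩
  · rw [hK, mem_sep_iff, mem_convexJoin]
    rintro ⟨⟨q, hq, r, hr, α, β, hα, hβ, hαβ, rfl⟩, hp⟩
    have hq' : f q = f x := hxt hq
    have hr' : f r < f x := hyz hr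
    simp only [map_add, map_smul, smul_eq_mul, hq'] at hp
    have hβ0 : β * (f x - f r) = 0 := by linear_combination f x * hαβ - hp
    obtain rfl : β = 0 := (mul_eq_zero.1 hβ0).resolve_right (sub_pos.2 hr').ne'
    obtain rfl : α = 1 := by linarith
    simpa using hq

lemma isExtreme_segment_of_add_eq_add {x y z t : E} (h : x + z = y + t)
    (hdim : 2 ≤ finrank ℝ (vectorSpan ℝ {x, y, z, t})) :
    IsExtreme ℝ (convexHull ℝ {x, y, z, t}) (segment ℝ x t) := by
  have hnot : y - x ∉ Submodule.span ℝ {t - x} := by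
    intro hmem
    have hle : vectorSpan ℝ {x, y, z, t} ≤ Submodule.span ℝ {t - x} := by
      rw [vectorSpan_eq_span_vsub_set_right ℝ (mem_insert x _), Submodule.span_le]
      rintro _ ⟨p, hp, rfl⟩
      rcases hp with rfl | rfl | rfl | rfl
      · simp
      · exact hmem
      · simp only [vsub_eq_sub]
        rw [show p - x = (y - x) + (t - x) by linear_combination (norm := module) h]
        exact add_mem hmem (Submodule.mem_span_singleton_self _)
      · exact Submodule.mem_span_singleton_self _
    have := (Submodule.finrank_mono hle).trans
      (by simpa using finrank_span_le_card (R := ℝ) ({t - x} : Set E))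
    omega
  obtain ⟨f, hfy, hker⟩ := Submodule.exists_le_ker_of_notMem hnot
  have hft : f t = f x := by
    simpa [sub_eq_zero] using hker (Submodule.mem_span_singleton_self (t - x))
  clear hker
  wlog hneg : f (y - x) < 0 generalizing f
  · refine this (-f) (by rwa [LinearMap.neg_apply, neg_ne_zero]) (by simpa using hft) ?_
    simpa using lt_of_le_of_ne (not_lt.1 hneg) (Ne.symm hfy)
  rw [map_sub, sub_neg] at hneg
  have hz : f x + f z = f y + f t := by simpa using congrArg f h
  exact isExtreme_segment_of_lt hft hneg (by linarith)

end ConvexPosition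

theorem add_eq_add_of_zero_one_of_convexPosition {ι : Type*} {x y z t : ι → ℝ}
    (hx : ∀ i, x i = 0 ∨ x i = 1) (hy : ∀ i, y i = 0 ∨ y i = 1) (hz : ∀ i, z i = 0 ∨ z i = 1)
    (ht : ∀ i, t i = 0 ∨ t i = 1)
    (hxy : x ≠ y) (hxz : x ≠ z) (hxt : x ≠ t) (hyz : y ≠ z) (hyt : y ≠ t) (hzt : z ≠ t)
    (hext : {x, y, z, t} ⊆ (convexHull ℝ {x, y, z, t}).extremePoints ℝ)
    (hdim : finrank ℝ (vectorSpan ℝ {x, y, z, t}) ≤ 2) :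
    x + t = y + z ∨ x + y = z + t ∨ x + z = y + t := by
  obtain ⟨a, b, c, d, hsum, h, ha, hsign⟩ :=
    exists_affine_relation_two_pos_two_neg hxy hxz hxt hyz hyt hzt hext hdim
  have hi : ∀ i, a * x i + b * y i + c * z i + d * t i = 0 := fun i => by
    simpa using congrFun h i
  rcases hsign with ⟨hd, hb, hc⟩ | ⟨hb, hc, hd⟩ | ⟨hc, hb, hd⟩
  · exact Or.inl <| funext fun i =>
      add_eq_add_of_zero_one (hx i) (hy i) (hz i) (ht i) ha hd hb hc hsum (hi i)
  · refine Or.inr <| Or.inl <| funext fun i =>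
      add_eq_add_of_zero_one (hx i) (hz i) (ht i) (hy i) ha hb hc hd (by linarith) ?_
    linear_combination hi i
  · refine Or.inr <| Or.inr <| funext fun i =>
      add_eq_add_of_zero_one (hx i) (hy i) (ht i) (hz i) ha hc hb hd (by linarith) ?_
    linear_combination hi i

lemma chiF_apply_eq_zero_or_one {n : ℕ} (W : Finset (Fin n)) (i : Fin n) :
    chiF W i = 0 ∨ chiF W i = 1 := by
  unfold chiF; split_ifs <;> simp

lemma chiF_injective {n : ℕ} : Function.Injective (chiF (n := n)) := by
  intro X Y h
  ext i
  have := congrFun h i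
  simp only [chiF] at this
  split_ifs at this <;> simp_all

lemma inter_eq_and_union_eq_of_chiF_add_eq {n : ℕ} {A B C D : Finset (Fin n)}
    (h : chiF A + chiF D = chiF B + chiF C) : A ∩ D = B ∩ C ∧ A ∪ D = B ∪ C := by
  have hi : ∀ i, (i ∈ A ∧ i ∈ D ↔ i ∈ B ∧ i ∈ C) ∧ (i ∈ A ∨ i ∈ D ↔ i ∈ B ∨ i ∈ C) := by
    intro i
    have := congrFun h i
    simp only [Pi.add_apply, chiF] at this
    split_ifs at this <;> norm_num at this <;> tauto
  exact ⟨Finset.ext fun i => by simpa using (hi i).1, Finset.ext fun i => by simpa using (hi i).2⟩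

lemma sdim_convexHull {V : Type*} [AddCommGroup V] [Module ℝ V] (s : Set V) :
    sdim (convexHull ℝ s) = finrank ℝ (vectorSpan ℝ s) := by
  rw [sdim, ← direction_affineSpan, affineSpan_convexHull, direction_affineSpan]

theorem statement5_general (n : ℕ) (A B C D : Finset (Fin n))
    (hAB : A ≠ B) (hAC : A ≠ C) (hAD : A ≠ D) (hBC : B ≠ C) (hBD : B ≠ D) (hCD : C ≠ D)
    (hdim : sdim (convexHull ℝ ({chiF A, chiF B, chiF C, chiF D} : Set (Fin n → ℝ))) = 2)
    (hvert : Set.extremePoints ℝ (convexHull ℝ ({chiF A, chiF B, chiF C, chiF D} : Set (Fin n → ℝ)))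
      = {chiF A, chiF B, chiF C, chiF D})
    (hdiag₁ : ¬ IsFaceOf (convexHull ℝ ({chiF A, chiF B, chiF C, chiF D} : Set (Fin n → ℝ)))
      (segment ℝ (chiF A) (chiF D))) :
    chiF A + chiF D = chiF B + chiF C ∧ A ∩ D = B ∩ C ∧ A ∪ D = B ∪ C := by
  rw [sdim_convexHull] at hdim
  have hchi : chiF A + chiF D = chiF B + chiF C := by
    rcases add_eq_add_of_zero_one_of_convexPosition (chiF_apply_eq_zero_or_one A)
        (chiF_apply_eq_zero_or_one B) (chiF_apply_eq_zero_or_one C) (chiF_apply_eq_zero_or_one D)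
        (chiF_injective.ne hAB) (chiF_injective.ne hAC) (chiF_injective.ne hAD)
        (chiF_injective.ne hBC) (chiF_injective.ne hBD) (chiF_injective.ne hCD)
        hvert.ge hdim.le with h | h | h
    · exact h
    · rw [Set.insert_comm (chiF B) (chiF C)] at hdim hdiag₁
      exact absurd (isExtreme_segment_of_add_eq_add h hdim.ge) hdiag₁
    · exact absurd (isExtreme_segment_of_add_eq_add h hdim.ge) hdiag₁
  exact ⟨hchi, inter_eq_and_union_eq_of_chiF_add_eq hchi⟩

/-- If `A, B, C, D ⊆ {1,…,n}` are pairwise distinct and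
`S = conv(χ_A, χ_B, χ_C, χ_D)` is a square (2-dimensional, with exactly these four
points as vertices) whose diagonals are `conv(χ_A, χ_D)` and `conv(χ_B, χ_C)`
(i.e. these two segments are not edges (faces) of `S`), then
`χ_A + χ_D = χ_B + χ_C`; in particular `A ∩ D = B ∩ C` and `A ∪ D = B ∪ C`. -/
theorem statement5 (n : ℕ) (A B C D : Finset (Fin n))
    (hAB : A ≠ B) (hAC : A ≠ C) (hAD : A ≠ D) (hBC : B ≠ C) (hBD : B ≠ D) (hCD : C ≠ D)
    (hdim : sdim (convexHull ℝ ({chiF A, chiF B, chiF C, chiF D} : Set (Fin n → ℝ))) = 2)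
    (hvert : Set.extremePoints ℝ (convexHull ℝ ({chiF A, chiF B, chiF C, chiF D} : Set (Fin n → ℝ)))
      = {chiF A, chiF B, chiF C, chiF D})
    (hdiag₁ : ¬ IsFaceOf (convexHull ℝ ({chiF A, chiF B, chiF C, chiF D} : Set (Fin n → ℝ)))
      (segment ℝ (chiF A) (chiF D)))
    (hdiag₂ : ¬ IsFaceOf (convexHull ℝ ({chiF A, chiF B, chiF C, chiF D} : Set (Fin n → ℝ)))
      (segment ℝ (chiF B) (chiF C))) :
    chiF A + chiF D = chiF B + chiF C ∧ A ∩ D = B ∩ C ∧ A ∪ D = B ∪ C :=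
  statement5_general n A B C D hAB hAC hAD hBC hBD hCD hdim hvert hdiag₁
end

section
/- Let Q be a finite poset. Then Q is connected if and only if the subset max(Q) ∪ min(Q) (the union of the set of maximal elements and the set of minimal elements of Q) is connected as a subset of Q. -/
open Set

open Paper

namespace Paper

variable {P : Type*} [PartialOrder P]

lemma mem_maxOf_univ_iff {x : P} : x ∈ maxOf (univ : Set P) ↔ IsMax x :=
  ⟨fun hx _ hxy => (hx.2 _ trivial hxy).ge, fun hx => ⟨trivial, fun _ _ hxy => hx.eq_of_le hxy⟩⟩

lemma mem_minOf_univ_iff {x : P} : x ∈ minOf (univ : Set P) ↔ IsMin x :=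
  ⟨fun hx _ hyx => (hx.2 _ trivial hyx).ge,
    fun hx => ⟨trivial, fun _ _ hyx => (hx.eq_of_ge hyx).symm⟩⟩

lemma exists_le_mem_maxOf_univ [Finite P] (a : P) : ∃ m ∈ maxOf (univ : Set P), a ≤ m := by
  obtain ⟨m, ham, hm⟩ := Finite.exists_le_maximal (p := fun _ : P => True) trivial
  exact ⟨m, mem_maxOf_univ_iff.2 (maximal_true.1 hm), ham⟩

lemma exists_ge_mem_minOf_univ [Finite P] (a : P) : ∃ m ∈ minOf (univ : Set P), m ≤ a := by
  obtain ⟨m, hma, hm⟩ := Finite.exists_le_minimal (p := fun _ : P => True) trivial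
  exact ⟨m, mem_minOf_univ_iff.2 (minimal_true.1 hm), hma⟩

theorem connSub_iff_of_subset_of_bounded {S T : Set P} (hST : S ⊆ T)
    (hlower : ∀ x ∈ T, ∃ s ∈ S, s ≤ x) (hupper : ∀ x ∈ T, ∃ t ∈ S, x ≤ t) :
    ConnSub T ↔ ConnSub S := by
  choose! lo hlo hlo_le using hlower
  choose! up hup hle_up using hupper
  let r : Set P → P → P → Prop := fun U a b => a ∈ U ∧ b ∈ U ∧ (a ≤ b ∨ b ≤ a)
  -- A step `p ~ q` of a path in `T` becomes `up p ~ l ~ up q` in `S`, with `l` the lower bound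
  -- of the smaller of `p`, `q`.
  have up_path {a b : P} (hab : Relation.ReflTransGen (r T) a b) :
      Relation.ReflTransGen (r S) (up a) (up b) := by
    induction hab with
    | refl => exact .refl
    | @tail b c _ hbc ih =>
      obtain ⟨hb, hc, hbc | hcb⟩ := hbc
      · exact (ih.tail ⟨hup b hb, hlo b hb, .inr ((hlo_le b hb).trans (hle_up b hb))⟩).tail
          ⟨hlo b hb, hup c hc, .inl ((hlo_le b hb).trans (hbc.trans (hle_up c hc)))⟩
      · exact (ih.tail ⟨hup b hb, hlo c hc, .inr ((hlo_le c hc).trans (hcb.trans (hle_up b hb)))⟩).tail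
          ⟨hlo c hc, hup c hc, .inl ((hlo_le c hc).trans (hle_up c hc))⟩
  constructor
  · rintro ⟨⟨a, ha⟩, hT⟩
    refine ⟨⟨up a, hup a ha⟩, fun x hx y hy => ?_⟩
    have hxT := hST hx
    have hyT := hST hy
    exact ((Relation.ReflTransGen.single ⟨hx, hup x hxT, .inl (hle_up x hxT)⟩).trans
      (up_path (hT x hxT y hyT))).tail ⟨hup y hyT, hy, .inr (hle_up y hyT)⟩
  · rintro ⟨⟨a, ha⟩, hS⟩
    refine ⟨⟨a, hST ha⟩, fun x hx y hy => ?_⟩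
    have hpath : Relation.ReflTransGen (r T) (up x) (up y) :=
      Relation.ReflTransGen.mono (fun _ _ hpq => ⟨hST hpq.1, hST hpq.2.1, hpq.2.2⟩) _ _
        (hS _ (hup x hx) _ (hup y hy))
    exact ((Relation.ReflTransGen.single ⟨hx, hST (hup x hx), .inl (hle_up x hx)⟩).trans
      hpath).tail ⟨hST (hup y hy), hy, .inr (hle_up y hy)⟩

end Paper

/-- A finite poset `Q` is connected if and only if the union of its sets
of maximal and minimal elements is connected as a subset of `Q`. -/
theorem statement6 (Q : Type) [Fintype Q] [PartialOrder Q] :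
    ConnSub (Set.univ : Set Q) ↔ ConnSub (maxOf (Set.univ : Set Q) ∪ minOf (Set.univ : Set Q)) :=
  connSub_iff_of_subset_of_bounded (subset_univ _)
    (fun x _ => (exists_ge_mem_minOf_univ x).imp fun _ ⟨hm, hle⟩ => ⟨.inr hm, hle⟩)
    (fun x _ => (exists_le_mem_maxOf_univ x).imp fun _ ⟨hm, hle⟩ => ⟨.inl hm, hle⟩)
end

section
/- Let P be a finite poset and let X ⊆ P be a connected subset. Then the intersection of the up-closure ⟨X⟩↑ = {y ∈ P : y ≥ x for some x ∈ X} and the down-closure ⟨X⟩↓ = {y ∈ P : y ≤ x for some x ∈ X}, that is, ⟨X⟩↑ ∩ ⟨X⟩↓ = {y ∈ P : there exist x, x′ ∈ X with x ≤ y and y ≤ x′}, is a connected subset of P. -/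
open Set

open Paper

/-- For a connected subset `X` of a finite poset `P`, the intersection
`⟨X⟩↑ ∩ ⟨X⟩↓` of the up-closure and the down-closure of `X` is connected. -/
theorem statement7 (P : Type) [Fintype P] [PartialOrder P] (X : Set P) (hX : ConnSub X) :
    ConnSub (upCl X ∩ dnCl X) := by
  obtain ⟨⟨x0, hx0⟩, hconn⟩ := hX
  have hsub : X ⊆ upCl X ∩ dnCl X := fun x hx =>
    ⟨⟨x, hx, le_refl x⟩, ⟨x, hx, le_refl x⟩⟩
  set S := upCl X ∩ dnCl X with hS
  refine ⟨⟨x0, hsub hx0⟩, ?_⟩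
  intro x hx y hy
  obtain ⟨a, haX, hax⟩ := hx.1
  obtain ⟨b, hbX, hby⟩ := hy.2
  have lift : Relation.ReflTransGen
      (fun p q : P => p ∈ X ∧ q ∈ X ∧ (p ≤ q ∨ q ≤ p)) a b →
      Relation.ReflTransGen (fun p q : P => p ∈ S ∧ q ∈ S ∧ (p ≤ q ∨ q ≤ p)) a b :=
    fun h => Relation.ReflTransGen.mono (r := fun p q : P => p ∈ X ∧ q ∈ X ∧ (p ≤ q ∨ q ≤ p))
      (p := fun p q : P => p ∈ S ∧ q ∈ S ∧ (p ≤ q ∨ q ≤ p))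
      (fun p q hpq => ⟨hsub hpq.1, hsub hpq.2.1, hpq.2.2⟩) a b h
  have h1 : Relation.ReflTransGen (fun p q : P => p ∈ S ∧ q ∈ S ∧ (p ≤ q ∨ q ≤ p)) x a :=
    Relation.ReflTransGen.single ⟨hx, hsub haX, Or.inr hax⟩
  have h3 : Relation.ReflTransGen (fun p q : P => p ∈ S ∧ q ∈ S ∧ (p ≤ q ∨ q ≤ p)) b y :=
    Relation.ReflTransGen.single ⟨hsub hbX, hy, Or.inr hby⟩
  exact h1.trans ((lift (hconn a haX b hbX)).trans h3)
end

section
/- Let P be a finite poset and let X ⊆ P be a subset of height at most 2 (i.e. X contains no chain of 3 elements). Let Y = ⟨X⟩↑ ∩ ⟨X⟩↓ be the intersection of the up-closure and the down-closure of X. Then min(Y) ∪ max(Y) = X, where min(Y) and max(Y) are the minimal and maximal elements of Y regarded as a subposet of P. -/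
open Set

open Paper

/-- Let `X` be a subset of a finite poset `P` of height at most 2 (no
chain of 3 elements inside `X`), and let `Y = ⟨X⟩↑ ∩ ⟨X⟩↓`. Then
`min(Y) ∪ max(Y) = X`. -/
theorem statement8 (P : Type) [Fintype P] [PartialOrder P] (X : Set P)
    (hX : ¬ ∃ a ∈ X, ∃ b ∈ X, ∃ c ∈ X, a < b ∧ b < c) :
    minOf (upCl X ∩ dnCl X) ∪ maxOf (upCl X ∩ dnCl X) = X := by
  ext x
  constructor
  · rintro (⟨⟨⟨a, haX, hax⟩, ⟨b, hbX, hxb⟩⟩, hmin⟩ | ⟨⟨⟨a, haX, hax⟩, ⟨b, hbX, hxb⟩⟩, hmax⟩)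
    · have haY : a ∈ upCl X ∩ dnCl X := ⟨⟨a, haX, le_refl a⟩, ⟨b, hbX, hax.trans hxb⟩⟩
      have := hmin a haY hax
      rwa [← this]
    · have hbY : b ∈ upCl X ∩ dnCl X := ⟨⟨a, haX, hax.trans hxb⟩, ⟨b, hbX, le_refl b⟩⟩
      have := hmax b hbY hxb
      rwa [this]
  · intro hxX
    have hxY : x ∈ upCl X ∩ dnCl X := ⟨⟨x, hxX, le_refl x⟩, ⟨x, hxX, le_refl x⟩⟩
    by_cases hmin : ∀ y ∈ upCl X ∩ dnCl X, y ≤ x → y = x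
    · exact Or.inl ⟨hxY, hmin⟩
    · push_neg at hmin
      obtain ⟨y, ⟨⟨a, haX, hay⟩, -⟩, hyx, hyne⟩ := hmin
      have haxlt : a < x := lt_of_le_of_lt hay (lt_of_le_of_ne hyx hyne)
      refine Or.inr ⟨hxY, fun z hz hxz => ?_⟩
      by_contra hne
      obtain ⟨-, ⟨c, hcX, hzc⟩⟩ := hz
      have hxclt : x < c := lt_of_lt_of_le (lt_of_le_of_ne hxz hne) hzc
      exact hX ⟨a, haX, x, hxX, c, hcX, haxlt, hxclt⟩
end

section
/- Let P be a finite poset and let A, B, C, D be four pairwise distinct filters of P. If conv(χ_A, χ_B, χ_C, χ_D) is a square face of the order polytope O(P), then the poset ({A, B, C, D}, ⊆) is isomorphic to the 4-element 'diamond' poset having a unique bottom element, a unique top element, and two incomparable middle elements (with the bottom below both middle elements and both middle elements below the top). -/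
open Set

open Paper

/-!
If every two of `A, B, C, D` were comparable, they would form a chain of four distinct sets.
The characteristic vectors of a chain of distinct sets are affinely independent: in a vanishing
affine relation, evaluating at a point of the largest set that misses the second largest kills
every coefficient but the largest one. The face would then be 3-dimensional.

So some `X, Y` among them are incomparable. The midpoint of `χ_X` and `χ_Y` is also the midpoint
of `χ_(X ∩ Y)` and `χ_(X ∪ Y)`, which lie in `O(P)`; as the square is a face, it contains these
two 0/1 vectors, which are vertices of `O(P)` and hence among the four vertices of the square.
Thus `{A, B, C, D} = {X ∩ Y, X, Y, X ∪ Y}`.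
-/

namespace Paper

variable {P : Type*}

theorem chi_apply_of_mem {W : Set P} {p : P} (h : p ∈ W) : chi W p = 1 :=
  indicator_of_mem h 1

theorem chi_apply_of_notMem {W : Set P} {p : P} (h : p ∉ W) : chi W p = 0 :=
  indicator_of_notMem h 1

theorem chi_apply_mem_pair (W : Set P) (p : P) : chi W p ∈ ({0, 1} : Set ℝ) := by
  by_cases h : p ∈ W
  · simp [chi_apply_of_mem h]
  · simp [chi_apply_of_notMem h]

theorem chi_injective : Function.Injective (chi : Set P → P → ℝ) :=
  fun _ _ h => indicator_one_inj ℝ h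

theorem chi_inter_add_chi_union (X Y : Set P) : chi (X ∩ Y) + chi (X ∪ Y) = chi X + chi Y := by
  rw [add_comm]
  exact indicator_union_add_inter _ X Y

theorem exists_forall_le_of_isChain {ι α : Type*} [PartialOrder α] {f : ι → α}
    (hf : IsChain (· ≤ ·) (range f)) {t : Finset ι} (ht : t.Nonempty) :
    ∃ i ∈ t, ∀ j ∈ t, f j ≤ f i := by
  obtain ⟨i, hit, hi⟩ := t.exists_maximalFor f ht
  refine ⟨i, hit, fun j hj => ?_⟩
  rcases hf.total (mem_range_self j) (mem_range_self i) with h | h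
  exacts [h, hi hj h]

section Chain

variable {ι : Type*} {V : ι → Set P}

theorem weight_eq_zero_of_forall_subset (hV : Function.Injective V)
    (hc : IsChain (· ⊆ ·) (range V)) {t : Finset ι} {w : ι → ℝ}
    (hw₀ : ∑ j ∈ t, w j = 0) (hw₁ : ∑ j ∈ t, w j • chi (V j) = 0)
    {i : ι} (hit : i ∈ t) (hi : ∀ j ∈ t, V j ⊆ V i) : w i = 0 := by
  classical
  rcases (t.erase i).eq_empty_or_nonempty with he | hne
  · obtain rfl : t = {i} :=
      (Finset.erase_eq_empty_iff _ _).1 he |>.resolve_left (Finset.ne_empty_of_mem hit)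
    simpa using hw₀
  obtain ⟨j, hjt, hj⟩ := exists_forall_le_of_isChain hc hne
  obtain ⟨p, hpi, hpj⟩ : ∃ p ∈ V i, p ∉ V j := not_subset.1 fun h =>
    Finset.ne_of_mem_erase hjt (hV ((hi j (Finset.mem_of_mem_erase hjt)).antisymm h))
  have hp := congrFun hw₁ p
  rw [Finset.sum_apply, Finset.sum_eq_single_of_mem i hit fun k hkt hki => ?_] at hp
  · simpa [chi_apply_of_mem hpi] using hp
  · have hpk : p ∉ V k := fun h => hpj (hj k (Finset.mem_erase.2 ⟨hki, hkt⟩) h)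
    simp [chi_apply_of_notMem hpk]

theorem affineIndependent_chi_of_isChain (hV : Function.Injective V)
    (hc : IsChain (· ⊆ ·) (range V)) : AffineIndependent ℝ (fun i => chi (V i)) := by
  classical
  rw [affineIndependent_iff]
  intro t
  induction t using Finset.strongInduction with
  | H t ih =>
    intro w hw₀ hw₁
    rcases t.eq_empty_or_nonempty with rfl | ht
    · simp
    obtain ⟨i, hit, hi⟩ := exists_forall_le_of_isChain hc ht
    have hwi := weight_eq_zero_of_forall_subset hV hc hw₀ hw₁ hit hi
    have ih' := ih (t.erase i) (Finset.erase_ssubset hit) w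
      (by rwa [Finset.sum_erase _ hwi]) (by rwa [Finset.sum_erase _ (by simp [hwi])])
    intro j hj
    rcases eq_or_ne j i with rfl | hji
    exacts [hwi, ih' j (Finset.mem_erase.2 ⟨hji, hj⟩)]

end Chain

section OrderPolytope

variable [PartialOrder P]

theorem chi_mem_orderPolytope {W : Set P} (hW : IsUpperSet W) : chi W ∈ orderPolytope P := by
  refine ⟨fun p => ?_, fun p q hpq => ?_⟩
  · rcases chi_apply_mem_pair W p with h | h <;> simp_all
  · by_cases h : p ∈ W
    · rw [chi_apply_of_mem h, chi_apply_of_mem (hW hpq h)]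
    · rw [chi_apply_of_notMem h]
      rcases chi_apply_mem_pair W q with h | h <;> simp_all

theorem chi_mem_extremePoints_orderPolytope {W : Set P} (hW : IsUpperSet W) :
    chi W ∈ (orderPolytope P).extremePoints ℝ := by
  have hcube : orderPolytope P ⊆ univ.pi fun _ => Icc (0 : ℝ) 1 := fun x hx p _ => hx.1 p
  refine inter_extremePoints_subset_extremePoints_of_subset hcube ⟨chi_mem_orderPolytope hW, ?_⟩
  rw [extremePoints_pi]
  intro p _
  rw [extremePoints_Icc zero_le_one]
  exact chi_apply_mem_pair W p

theorem IsExtreme.chi_inter_mem_and_chi_union_mem {F : Set (P → ℝ)}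
    (hF : IsExtreme ℝ (orderPolytope P) F) (hFc : Convex ℝ F) {X Y : Set P}
    (hX : IsUpperSet X) (hY : IsUpperSet Y) (hXF : chi X ∈ F) (hYF : chi Y ∈ F) :
    chi (X ∩ Y) ∈ F ∧ chi (X ∪ Y) ∈ F := by
  have hmid : (1 / 2 : ℝ) • chi X + (1 / 2 : ℝ) • chi Y ∈ F :=
    hFc hXF hYF (by norm_num) (by norm_num) (by norm_num)
  have hseg : (1 / 2 : ℝ) • chi X + (1 / 2 : ℝ) • chi Y ∈
      openSegment ℝ (chi (X ∩ Y)) (chi (X ∪ Y)) :=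
    ⟨1 / 2, 1 / 2, by norm_num, by norm_num, by norm_num,
      by rw [← smul_add, ← smul_add, chi_inter_add_chi_union]⟩
  have hinter := chi_mem_orderPolytope (hX.inter hY)
  have hunion := chi_mem_orderPolytope (hX.union hY)
  exact ⟨hF.left_mem_of_mem_openSegment hinter hunion hmid hseg,
    hF.right_mem_of_mem_openSegment hinter hunion hmid hseg⟩

theorem inter_mem_and_union_mem_of_isExtreme_convexHull {𝒜 : Set (Set P)}
    (h𝒜 : ∀ X ∈ 𝒜, IsUpperSet X)
    (hF : IsExtreme ℝ (orderPolytope P) (convexHull ℝ (chi '' 𝒜)))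
    {X Y : Set P} (hX : X ∈ 𝒜) (hY : Y ∈ 𝒜) : X ∩ Y ∈ 𝒜 ∧ X ∪ Y ∈ 𝒜 := by
  have hmem : ∀ Z, IsUpperSet Z → chi Z ∈ convexHull ℝ (chi '' 𝒜) → Z ∈ 𝒜 := by
    intro Z hZ hZF
    have hext : chi Z ∈ (convexHull ℝ (chi '' 𝒜)).extremePoints ℝ :=
      hF.extremePoints_eq ▸ ⟨hZF, chi_mem_extremePoints_orderPolytope hZ⟩
    obtain ⟨Z', hZ', h⟩ := extremePoints_convexHull_subset hext
    exact chi_injective h ▸ hZ'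
  have hsub := subset_convexHull ℝ (chi '' 𝒜)
  obtain ⟨hinter, hunion⟩ := hF.chi_inter_mem_and_chi_union_mem (convex_convexHull ℝ _)
    (h𝒜 X hX) (h𝒜 Y hY) (hsub (mem_image_of_mem chi hX)) (hsub (mem_image_of_mem chi hY))
  exact ⟨hmem _ ((h𝒜 X hX).inter (h𝒜 Y hY)) hinter, hmem _ ((h𝒜 X hX).union (h𝒜 Y hY)) hunion⟩

end OrderPolytope

theorem sdim_convexHull {V : Type*} [AddCommGroup V] [Module ℝ V] (s : Set V) :
    sdim (convexHull ℝ s) = sdim s := by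
  rw [sdim, sdim, ← direction_affineSpan, affineSpan_convexHull, direction_affineSpan]

theorem sdim_convexHull_image_chi_add_one {ι : Type*} [Fintype ι] [Nonempty ι] {V : ι → Set P}
    (hV : Function.Injective V) (hc : IsChain (· ⊆ ·) (range V)) :
    sdim (convexHull ℝ (chi '' range V)) + 1 = Fintype.card ι := by
  rw [sdim_convexHull, sdim, ← range_comp]
  exact (affineIndependent_chi_of_isChain hV hc).finrank_vectorSpan_add_one

theorem ncard_inter_left_right_union_eq_four {α : Type*} {X Y : Set α} (hXY : ¬ X ⊆ Y)
    (hYX : ¬ Y ⊆ X) :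
    ({X ∩ Y, X, Y, X ∪ Y} : Set (Set α)).ncard = 4 :=
  ncard_eq_four.2 ⟨_, _, _, _, mt inter_eq_left.1 hXY, mt inter_eq_right.1 hYX,
    fun h => hXY (subset_union_left.trans (h.ge.trans inter_subset_right)),
    fun h => hXY h.subset, fun h => hYX (union_eq_left.1 h.symm),
    fun h => hXY (union_eq_right.1 h.symm), rfl⟩

end Paper

theorem statement13_general (P : Type) [PartialOrder P] (A B C D : Set P)
    (hA : IsUpperSet A) (hB : IsUpperSet B) (hC : IsUpperSet C) (hD : IsUpperSet D)
    (hAB : A ≠ B) (hAC : A ≠ C) (hAD : A ≠ D) (hBC : B ≠ C) (hBD : B ≠ D) (hCD : C ≠ D)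
    (hsq : IsSquareFaceOf (orderPolytope P)
      (convexHull ℝ ({chi A, chi B, chi C, chi D} : Set (P → ℝ)))) :
    ∃ W X Y Z : Set P, ({W, X, Y, Z} : Set (Set P)) = {A, B, C, D} ∧
      W ⊆ X ∧ W ⊆ Y ∧ X ⊆ Z ∧ Y ⊆ Z ∧ ¬ X ⊆ Y ∧ ¬ Y ⊆ X := by
  obtain ⟨hface, hdim, -⟩ := hsq
  set 𝒜 : Set (Set P) := {A, B, C, D} with h𝒜
  have hrange : range ![A, B, C, D] = 𝒜 := by
    simp only [h𝒜, Matrix.range_cons, Matrix.range_empty, union_empty, singleton_union]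
  have himage : ({chi A, chi B, chi C, chi D} : Set (P → ℝ)) = chi '' 𝒜 := by
    simp [h𝒜, image_insert_eq]
  rw [himage] at hface hdim
  obtain ⟨X, hX, Y, hY, hXY, hYX⟩ : ∃ X ∈ 𝒜, ∃ Y ∈ 𝒜, ¬ X ⊆ Y ∧ ¬ Y ⊆ X := by
    by_contra! hchain
    have hinj : Function.Injective ![A, B, C, D] := by
      intro i j h
      fin_cases i <;> fin_cases j <;> simp_all
    have h4 := sdim_convexHull_image_chi_add_one hinj
      (hrange ▸ fun X hX Y hY _ => or_iff_not_imp_left.2 (hchain X hX Y hY))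
    rw [hrange, hdim] at h4
    simp at h4
  have hupper : ∀ Z ∈ 𝒜, IsUpperSet Z := by simp [h𝒜, hA, hB, hC, hD]
  obtain ⟨hinter, hunion⟩ := inter_mem_and_union_mem_of_isExtreme_convexHull hupper hface hX hY
  refine ⟨X ∩ Y, X, Y, X ∪ Y, ?_, inter_subset_left, inter_subset_right, subset_union_left,
    subset_union_right, hXY, hYX⟩
  have hsub : {X ∩ Y, X, Y, X ∪ Y} ⊆ 𝒜 := by
    simp only [insert_subset_iff, singleton_subset_iff]
    exact ⟨hinter, hX, hY, hunion⟩
  refine eq_of_subset_of_ncard_le hsub ?_ (toFinite _)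
  rw [ncard_inter_left_right_union_eq_four hXY hYX,
    ncard_eq_four.2 ⟨A, B, C, D, hAB, hAC, hAD, hBC, hBD, hCD, rfl⟩]

/-- If `A, B, C, D` are pairwise distinct filters of a finite poset `P`
and `conv(χ_A, χ_B, χ_C, χ_D)` is a square face of the order polytope `O(P)`, then the
poset `({A, B, C, D}, ⊆)` is a diamond: it has a bottom element, a top element, and two
incomparable middle elements. -/
theorem statement13 (P : Type) [Fintype P] [PartialOrder P] (A B C D : Set P)
    (hA : IsUpperSet A) (hB : IsUpperSet B) (hC : IsUpperSet C) (hD : IsUpperSet D)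
    (hAB : A ≠ B) (hAC : A ≠ C) (hAD : A ≠ D) (hBC : B ≠ C) (hBD : B ≠ D) (hCD : C ≠ D)
    (hsq : IsSquareFaceOf (orderPolytope P)
      (convexHull ℝ ({chi A, chi B, chi C, chi D} : Set (P → ℝ)))) :
    ∃ W X Y Z : Set P, ({W, X, Y, Z} : Set (Set P)) = {A, B, C, D} ∧
      W ⊆ X ∧ W ⊆ Y ∧ X ⊆ Z ∧ Y ⊆ Z ∧ ¬ X ⊆ Y ∧ ¬ Y ⊆ X :=
  statement13_general P A B C D hA hB hC hD hAB hAC hAD hBC hBD hCD hsq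
end

section
/- Let P be a finite poset and let A and B be distinct antichains of P. If the symmetric difference A Δ B is a connected subset of P, then, possibly after exchanging the names of A and B, one of the following holds: (i) A ⊊ B and |B \ A| = 1; or (ii) A ⊄ B, and whenever a ∈ A and b ∈ B are comparable and distinct, one has a < b. -/
open Set

open Paper

/-- Let `A ≠ B` be antichains of a finite poset `P` with `A Δ B`
connected. Then, up to renaming `A` and `B`, either (i) `A ⊊ B` and `|B \ A| = 1`, or
(ii) `A ⊄ B` and whenever `a ∈ A` and `b ∈ B` are comparable and distinct, `a < b`. -/
theorem statement15 (P : Type) [Fintype P] [PartialOrder P] (A B : Set P)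
    (hA : IsAntichain (· ≤ ·) A) (hB : IsAntichain (· ≤ ·) B) (hne : A ≠ B)
    (hconn : ConnSub (symmDiff A B)) :
    ∃ A' B' : Set P, ({A', B'} : Set (Set P)) = {A, B} ∧
      ((A' ⊂ B' ∧ (B' \ A').ncard = 1) ∨
       (¬ A' ⊆ B' ∧ ∀ a ∈ A', ∀ b ∈ B', a ≠ b → (a ≤ b ∨ b ≤ a) → a < b)) := by
  classical
  obtain ⟨hSne, hpath⟩ := hconn
  have memS : ∀ x, x ∈ symmDiff A B ↔ (x ∈ A \ B ∨ x ∈ B \ A) := by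
    intro x; rw [Set.mem_symmDiff]; simp [Set.mem_diff]
  -- helper: if S is contained in an antichain then it's a singleton
  have singleton_case : ∀ (C : Set P), IsAntichain (· ≤ ·) C → symmDiff A B ⊆ C →
      ∃ x, symmDiff A B = {x} := by
    intro C hC hsub
    obtain ⟨x, hx⟩ := hSne
    refine ⟨x, Set.eq_singleton_iff_unique_mem.2 ⟨hx, ?_⟩⟩
    have eqstep : ∀ u v : P, u ∈ symmDiff A B → v ∈ symmDiff A B →
        (u ≤ v ∨ v ≤ u) → u = v := by
      intro u v hu hv hcmp
      by_contra hne'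
      rcases hcmp with h | h
      · exact hC (hsub hu) (hsub hv) hne' h
      · exact hC (hsub hv) (hsub hu) (Ne.symm hne') h
    intro y hy
    have h := hpath y hy x hx
    induction h with
    | refl => rfl
    | tail h1 h2 ih =>
      obtain ⟨hu, hv, hcmp⟩ := h2
      exact (ih hu).trans (eqstep _ _ hu hv hcmp)
  by_cases hAB : A ⊆ B
  · -- case A ⊊ B
    have hsub : symmDiff A B ⊆ B := by
      intro x hx; rcases (memS x).1 hx with h | h
      · exact absurd (hAB h.1) h.2
      · exact h.1
    obtain ⟨x, hx⟩ := singleton_case B hB hsub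
    have hdiff : B \ A = {x} := by
      rw [← hx]; ext y
      rw [memS y]
      constructor
      · intro h; exact Or.inr h
      · rintro (h | h)
        · exact absurd (hAB h.1) h.2
        · exact h
    exact ⟨A, B, rfl, Or.inl ⟨hAB.ssubset_of_ne hne, by rw [hdiff]; exact Set.ncard_singleton x⟩⟩
  by_cases hBA : B ⊆ A
  · have hsub : symmDiff A B ⊆ A := by
      intro x hx; rcases (memS x).1 hx with h | h
      · exact h.1
      · exact absurd (hBA h.1) h.2
    obtain ⟨x, hx⟩ := singleton_case A hA hsub
    have hdiff : A \ B = {x} := by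
      rw [← hx]; ext y
      rw [memS y]
      constructor
      · intro h; exact Or.inl h
      · rintro (h | h)
        · exact h
        · exact absurd (hBA h.1) h.2
    exact ⟨B, A, Set.pair_comm B A, Or.inl ⟨(HasSubset.Subset.ssubset_of_ne hBA (Ne.symm hne)),
      by rw [hdiff]; exact Set.ncard_singleton x⟩⟩
  -- main case: neither containment
  set Up : P → Prop := fun x =>
    (x ∈ A \ B ∧ ∃ b ∈ B \ A, x < b) ∨ (x ∈ B \ A ∧ ∃ a ∈ A \ B, a < x) with hUp
  have step : ∀ x y : P, (x ∈ symmDiff A B ∧ y ∈ symmDiff A B ∧ (x ≤ y ∨ y ≤ x)) →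
      Up x → Up y := by
    rintro x y ⟨hxS, hyS, hcmp⟩ hx
    rcases hx with ⟨⟨hxA, hxB⟩, b, ⟨hbB, hbA⟩, hxb⟩ | ⟨⟨hxB, hxA⟩, a, ⟨haA, haB⟩, hax⟩
    · rcases (memS y).1 hyS with ⟨hyA, hyB⟩ | ⟨hyB, hyA⟩
      · -- y ∈ A \ B : then y = x
        have : y = x := by
          by_contra hne'
          rcases hcmp with h | h
          · exact hA hxA hyA (fun e => hne' e.symm) h
          · exact hA hyA hxA hne' h
        rw [this]
        exact Or.inl ⟨⟨hxA, hxB⟩, b, ⟨hbB, hbA⟩, hxb⟩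
      · -- y ∈ B \ A : must have x < y
        have hxy : x < y := by
          rcases hcmp with h | h
          · exact lt_of_le_of_ne h (fun e => hxB (e ▸ hyB))
          · exfalso
            have hyb : y ≠ b := fun e => absurd (e ▸ h) (not_le_of_gt hxb)
            exact hB hyB hbB hyb (h.trans hxb.le)
        exact Or.inr ⟨⟨hyB, hyA⟩, x, ⟨hxA, hxB⟩, hxy⟩
    · rcases (memS y).1 hyS with ⟨hyA, hyB⟩ | ⟨hyB, hyA⟩
      · -- y ∈ A \ B : must have y < x
        have hyx : y < x := by
          rcases hcmp with h | h
          · exfalso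
            have hay : a ≠ y := fun e => absurd (e ▸ h) (not_le_of_gt hax)
            exact hA haA hyA hay (hax.le.trans h)
          · exact lt_of_le_of_ne h (fun e => hyB (e ▸ hxB))
        exact Or.inl ⟨⟨hyA, hyB⟩, x, ⟨hxB, hxA⟩, hyx⟩
      · -- y ∈ B \ A : then y = x
        have : y = x := by
          by_contra hne'
          rcases hcmp with h | h
          · exact hB hxB hyB (fun e => hne' e.symm) h
          · exact hB hyB hxB hne' h
        rw [this]
        exact Or.inr ⟨⟨hxB, hxA⟩, a, ⟨haA, haB⟩, hax⟩
  have inv : ∀ x y : P, Relation.ReflTransGen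
      (fun a b : P => a ∈ symmDiff A B ∧ b ∈ symmDiff A B ∧ (a ≤ b ∨ b ≤ a)) x y →
      Up x → Up y := by
    intro x y h
    induction h with
    | refl => exact id
    | tail h1 h2 ih => exact fun hx => step _ _ h2 (ih hx)
  -- reduce comparabilities to the diffs
  have reduce : ∀ a ∈ A, ∀ b ∈ B, a ≠ b → (a ≤ b ∨ b ≤ a) →
      a ∈ A \ B ∧ b ∈ B \ A := by
    intro a ha b hb hab hcmp
    constructor
    · refine ⟨ha, fun haB => ?_⟩
      rcases hcmp with h | h
      · exact hB haB hb hab h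
      · exact hB hb haB (Ne.symm hab) h
    · refine ⟨hb, fun hbA => ?_⟩
      rcases hcmp with h | h
      · exact hA ha hbA hab h
      · exact hA hbA ha (Ne.symm hab) h
  by_cases hall : ∀ a ∈ A, ∀ b ∈ B, a ≠ b → (a ≤ b ∨ b ≤ a) → a < b
  · exact ⟨A, B, rfl, Or.inr ⟨hAB, hall⟩⟩
  · push_neg at hall
    obtain ⟨a, ha, b, hb, hab, hcmp, hnlt⟩ := hall
    obtain ⟨haD, hbD⟩ := reduce a ha b hb hab hcmp
    have hba : b < a := by
      rcases hcmp with h | h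
      · exact absurd (lt_of_le_of_ne h hab) hnlt
      · exact lt_of_le_of_ne h (Ne.symm hab)
    have haS : a ∈ symmDiff A B := (memS a).2 (Or.inl haD)
    -- a is not Up
    have hnUpa : ¬ Up a := by
      rintro (⟨_, b', ⟨hb'B, _⟩, hab'⟩ | ⟨⟨_, haA⟩, _⟩)
      · exact hB hbD.1 hb'B (fun e => absurd (e ▸ hba) (lt_asymm hab')) (hba.le.trans hab'.le)
      · exact haA haD.1
    refine ⟨B, A, Set.pair_comm B A, Or.inr ⟨hBA, ?_⟩⟩
    intro x hx y hy hxy hcmp'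
    obtain ⟨hyD, hxD⟩ := reduce y hy x hx (Ne.symm hxy) hcmp'.symm
    by_contra hnlt'
    have hyx : y < x := by
      rcases hcmp' with h | h
      · exact absurd (lt_of_le_of_ne h hxy) hnlt'
      · exact lt_of_le_of_ne h (Ne.symm hxy)
    -- then Up y, and path from y to a gives Up a, contradiction
    have hUpy : Up y := Or.inl ⟨hyD, x, hxD, hyx⟩
    have hyS : y ∈ symmDiff A B := (memS y).2 (Or.inl hyD)
    exact hnUpa (inv y a (hpath y hyS a haS) hUpy)
end

section
/- Let P be a finite poset and let A, B, C, D be four pairwise distinct antichains of P. If conv(χ_A, χ_B, χ_C, χ_D) is a square face of the chain polytope C(P), then the poset ({A, B, C, D}, ⊆) is isomorphic to one of the following three 4-element posets: (a) the 'diamond' with a unique bottom, a unique top, and two incomparable middle elements; (b) the disjoint union of two 2-element chains; or (c) the 4-element antichain. -/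
open Set

open Paper

section Aux

variable {P : Type*}

lemma chi01 (A : Set P) (p : P) : chi A p = 0 ∨ chi A p = 1 := by
  by_cases h : p ∈ A <;> simp [chi, Set.indicator, h]

lemma chi_inj {A B : Set P} (h : chi A = chi B) : A = B := by
  ext p
  have hp := congrFun h p
  by_cases hA : p ∈ A <;> by_cases hB : p ∈ B <;>
    simp [chi, Set.indicator, hA, hB] at hp ⊢ <;> tauto

lemma onePos (w0 w1 w2 w3 α β γ δ : ℝ) (h0 : 0 < w0) (h1 : w1 < 0)
    (h2 : w2 ≤ 0) (h3 : w3 ≤ 0) (hs : w0 + w1 + w2 + w3 = 0)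
    (hα : α = 0 ∨ α = 1) (hβ : β = 0 ∨ β = 1) (hγ : γ = 0 ∨ γ = 1) (hδ : δ = 0 ∨ δ = 1)
    (hrel : w0 * α + w1 * β + w2 * γ + w3 * δ = 0) : α = β := by
  rcases hα with rfl | rfl <;> rcases hβ with rfl | rfl <;>
    rcases hγ with rfl | rfl <;> rcases hδ with rfl | rfl <;> linarith

lemma quad (w0 w1 w2 w3 α β γ δ : ℝ) (h0 : 0 < w0) (h1 : 0 < w1)
    (h2 : w2 < 0) (h3 : w3 < 0) (hs : w0 + w1 + w2 + w3 = 0)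
    (hα : α = 0 ∨ α = 1) (hβ : β = 0 ∨ β = 1) (hγ : γ = 0 ∨ γ = 1) (hδ : δ = 0 ∨ δ = 1)
    (hrel : w0 * α + w1 * β + w2 * γ + w3 * δ = 0) : α + β = γ + δ := by
  rcases hα with rfl | rfl <;> rcases hβ with rfl | rfl <;>
    rcases hγ with rfl | rfl <;> rcases hδ with rfl | rfl <;> linarith

lemma mega {P : Type*} (a b c d : P → ℝ)
    (ha : ∀ p, a p = 0 ∨ a p = 1) (hb : ∀ p, b p = 0 ∨ b p = 1)
    (hc : ∀ p, c p = 0 ∨ c p = 1) (hd : ∀ p, d p = 0 ∨ d p = 1)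
    (hab : a ≠ b) (hac : a ≠ c) (had : a ≠ d)
    (hbc : b ≠ c) (hbd : b ≠ d) (hcd : c ≠ d)
    (w0 w1 w2 w3 : ℝ) (hs : w0 + w1 + w2 + w3 = 0)
    (hne : ¬ (w0 = 0 ∧ w1 = 0 ∧ w2 = 0 ∧ w3 = 0))
    (hrel : ∀ p, w0 * a p + w1 * b p + w2 * c p + w3 * d p = 0) :
    (∀ p, a p + b p = c p + d p) ∨ (∀ p, a p + c p = b p + d p) ∨
      (∀ p, a p + d p = b p + c p) := by
  rcases lt_trichotomy w0 0 with h0 | h0 | h0 <;>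
    rcases lt_trichotomy w1 0 with h1 | h1 | h1 <;>
      rcases lt_trichotomy w2 0 with h2 | h2 | h2 <;>
        rcases lt_trichotomy w3 0 with h3 | h3 | h3
  · exfalso; linarith
  · exfalso; linarith
  · exact absurd (funext fun p => onePos w3 w0 w1 w2 (d p) (a p) (b p) (c p) h3 h0 h1.le h2.le (by linarith) (hd p) (ha p) (hb p) (hc p) (by linarith [hrel p])) (Ne.symm had)
  · exfalso; linarith
  · exfalso; linarith
  · exact absurd (funext fun p => onePos w3 w0 w1 w2 (d p) (a p) (b p) (c p) h3 h0 h1.le h2.le (by linarith) (hd p) (ha p) (hb p) (hc p) (by linarith [hrel p])) (Ne.symm had)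
  · exact absurd (funext fun p => onePos w2 w0 w1 w3 (c p) (a p) (b p) (d p) h2 h0 h1.le h3.le (by linarith) (hc p) (ha p) (hb p) (hd p) (by linarith [hrel p])) (Ne.symm hac)
  · exact absurd (funext fun p => onePos w2 w0 w1 w3 (c p) (a p) (b p) (d p) h2 h0 h1.le h3.le (by linarith) (hc p) (ha p) (hb p) (hd p) (by linarith [hrel p])) (Ne.symm hac)
  · exact Or.inl (fun p => (quad w2 w3 w0 w1 (c p) (d p) (a p) (b p) h2 h3 h0 h1 (by linarith) (hc p) (hd p) (ha p) (hb p) (by linarith [hrel p])).symm)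
  · exfalso; linarith
  · exfalso; linarith
  · exact absurd (funext fun p => onePos w3 w0 w1 w2 (d p) (a p) (b p) (c p) h3 h0 h1.le h2.le (by linarith) (hd p) (ha p) (hb p) (hc p) (by linarith [hrel p])) (Ne.symm had)
  · exfalso; linarith
  · exfalso; linarith
  · exact absurd (funext fun p => onePos w3 w0 w1 w2 (d p) (a p) (b p) (c p) h3 h0 h1.le h2.le (by linarith) (hd p) (ha p) (hb p) (hc p) (by linarith [hrel p])) (Ne.symm had)
  · exact absurd (funext fun p => onePos w2 w0 w1 w3 (c p) (a p) (b p) (d p) h2 h0 h1.le h3.le (by linarith) (hc p) (ha p) (hb p) (hd p) (by linarith [hrel p])) (Ne.symm hac)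
  · exact absurd (funext fun p => onePos w2 w0 w1 w3 (c p) (a p) (b p) (d p) h2 h0 h1.le h3.le (by linarith) (hc p) (ha p) (hb p) (hd p) (by linarith [hrel p])) (Ne.symm hac)
  · exact absurd (funext fun p => onePos (-w0) (-w2) (-w1) (-w3) (a p) (c p) (b p) (d p) (by linarith) (by linarith) (by linarith) (by linarith) (by linarith) (ha p) (hc p) (hb p) (hd p) (by linarith [hrel p])) hac
  · exact absurd (funext fun p => onePos w1 w0 w2 w3 (b p) (a p) (c p) (d p) h1 h0 h2.le h3.le (by linarith) (hb p) (ha p) (hc p) (hd p) (by linarith [hrel p])) (Ne.symm hab)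
  · exact absurd (funext fun p => onePos w1 w0 w2 w3 (b p) (a p) (c p) (d p) h1 h0 h2.le h3.le (by linarith) (hb p) (ha p) (hc p) (hd p) (by linarith [hrel p])) (Ne.symm hab)
  · exact Or.inr (Or.inl (fun p => (quad w1 w3 w0 w2 (b p) (d p) (a p) (c p) h1 h3 h0 h2 (by linarith) (hb p) (hd p) (ha p) (hc p) (by linarith [hrel p])).symm))
  · exact absurd (funext fun p => onePos w1 w0 w2 w3 (b p) (a p) (c p) (d p) h1 h0 h2.le h3.le (by linarith) (hb p) (ha p) (hc p) (hd p) (by linarith [hrel p])) (Ne.symm hab)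
  · exact absurd (funext fun p => onePos w1 w0 w2 w3 (b p) (a p) (c p) (d p) h1 h0 h2.le h3.le (by linarith) (hb p) (ha p) (hc p) (hd p) (by linarith [hrel p])) (Ne.symm hab)
  · exact absurd (funext fun p => onePos (-w0) (-w1) (-w2) (-w3) (a p) (b p) (c p) (d p) (by linarith) (by linarith) (by linarith) (by linarith) (by linarith) (ha p) (hb p) (hc p) (hd p) (by linarith [hrel p])) hab
  · exact Or.inr (Or.inr (fun p => (quad w1 w2 w0 w3 (b p) (c p) (a p) (d p) h1 h2 h0 h3 (by linarith) (hb p) (hc p) (ha p) (hd p) (by linarith [hrel p])).symm))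
  · exact absurd (funext fun p => onePos (-w0) (-w1) (-w2) (-w3) (a p) (b p) (c p) (d p) (by linarith) (by linarith) (by linarith) (by linarith) (by linarith) (ha p) (hb p) (hc p) (hd p) (by linarith [hrel p])) hab
  · exact absurd (funext fun p => onePos (-w0) (-w1) (-w2) (-w3) (a p) (b p) (c p) (d p) (by linarith) (by linarith) (by linarith) (by linarith) (by linarith) (ha p) (hb p) (hc p) (hd p) (by linarith [hrel p])) hab
  · exfalso; linarith
  · exfalso; linarith
  · exact absurd (funext fun p => onePos w3 w1 w0 w2 (d p) (b p) (a p) (c p) h3 h1 h0.le h2.le (by linarith) (hd p) (hb p) (ha p) (hc p) (by linarith [hrel p])) (Ne.symm hbd)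
  · exfalso; linarith
  · exfalso; linarith
  · exact absurd (funext fun p => onePos w3 w1 w0 w2 (d p) (b p) (a p) (c p) h3 h1 h0.le h2.le (by linarith) (hd p) (hb p) (ha p) (hc p) (by linarith [hrel p])) (Ne.symm hbd)
  · exact absurd (funext fun p => onePos w2 w1 w0 w3 (c p) (b p) (a p) (d p) h2 h1 h0.le h3.le (by linarith) (hc p) (hb p) (ha p) (hd p) (by linarith [hrel p])) (Ne.symm hbc)
  · exact absurd (funext fun p => onePos w2 w1 w0 w3 (c p) (b p) (a p) (d p) h2 h1 h0.le h3.le (by linarith) (hc p) (hb p) (ha p) (hd p) (by linarith [hrel p])) (Ne.symm hbc)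
  · exact absurd (funext fun p => onePos (-w1) (-w2) (-w0) (-w3) (b p) (c p) (a p) (d p) (by linarith) (by linarith) (by linarith) (by linarith) (by linarith) (hb p) (hc p) (ha p) (hd p) (by linarith [hrel p])) hbc
  · exfalso; linarith
  · exfalso; linarith
  · exact absurd (funext fun p => onePos w3 w2 w0 w1 (d p) (c p) (a p) (b p) h3 h2 h0.le h1.le (by linarith) (hd p) (hc p) (ha p) (hb p) (by linarith [hrel p])) (Ne.symm hcd)
  · exfalso; linarith
  · exact absurd ⟨h0, h1, h2, h3⟩ hne
  · exfalso; linarith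
  · exact absurd (funext fun p => onePos w2 w3 w0 w1 (c p) (d p) (a p) (b p) h2 h3 h0.le h1.le (by linarith) (hc p) (hd p) (ha p) (hb p) (by linarith [hrel p])) hcd
  · exfalso; linarith
  · exfalso; linarith
  · exact absurd (funext fun p => onePos w1 w2 w0 w3 (b p) (c p) (a p) (d p) h1 h2 h0.le h3.le (by linarith) (hb p) (hc p) (ha p) (hd p) (by linarith [hrel p])) hbc
  · exact absurd (funext fun p => onePos w1 w2 w0 w3 (b p) (c p) (a p) (d p) h1 h2 h0.le h3.le (by linarith) (hb p) (hc p) (ha p) (hd p) (by linarith [hrel p])) hbc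
  · exact absurd (funext fun p => onePos (-w2) (-w1) (-w0) (-w3) (c p) (b p) (a p) (d p) (by linarith) (by linarith) (by linarith) (by linarith) (by linarith) (hc p) (hb p) (ha p) (hd p) (by linarith [hrel p])) (Ne.symm hbc)
  · exact absurd (funext fun p => onePos w1 w3 w0 w2 (b p) (d p) (a p) (c p) h1 h3 h0.le h2.le (by linarith) (hb p) (hd p) (ha p) (hc p) (by linarith [hrel p])) hbd
  · exfalso; linarith
  · exfalso; linarith
  · exact absurd (funext fun p => onePos (-w3) (-w1) (-w0) (-w2) (d p) (b p) (a p) (c p) (by linarith) (by linarith) (by linarith) (by linarith) (by linarith) (hd p) (hb p) (ha p) (hc p) (by linarith [hrel p])) (Ne.symm hbd)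
  · exfalso; linarith
  · exfalso; linarith
  · exact absurd (funext fun p => onePos w0 w1 w2 w3 (a p) (b p) (c p) (d p) h0 h1 h2.le h3.le (by linarith) (ha p) (hb p) (hc p) (hd p) (by linarith [hrel p])) hab
  · exact absurd (funext fun p => onePos w0 w1 w2 w3 (a p) (b p) (c p) (d p) h0 h1 h2.le h3.le (by linarith) (ha p) (hb p) (hc p) (hd p) (by linarith [hrel p])) hab
  · exact Or.inr (Or.inr (fun p => quad w0 w3 w1 w2 (a p) (d p) (b p) (c p) h0 h3 h1 h2 (by linarith) (ha p) (hd p) (hb p) (hc p) (by linarith [hrel p])))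
  · exact absurd (funext fun p => onePos w0 w1 w2 w3 (a p) (b p) (c p) (d p) h0 h1 h2.le h3.le (by linarith) (ha p) (hb p) (hc p) (hd p) (by linarith [hrel p])) hab
  · exact absurd (funext fun p => onePos w0 w1 w2 w3 (a p) (b p) (c p) (d p) h0 h1 h2.le h3.le (by linarith) (ha p) (hb p) (hc p) (hd p) (by linarith [hrel p])) hab
  · exact absurd (funext fun p => onePos (-w1) (-w0) (-w2) (-w3) (b p) (a p) (c p) (d p) (by linarith) (by linarith) (by linarith) (by linarith) (by linarith) (hb p) (ha p) (hc p) (hd p) (by linarith [hrel p])) (Ne.symm hab)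
  · exact Or.inr (Or.inl (fun p => quad w0 w2 w1 w3 (a p) (c p) (b p) (d p) h0 h2 h1 h3 (by linarith) (ha p) (hc p) (hb p) (hd p) (by linarith [hrel p])))
  · exact absurd (funext fun p => onePos (-w1) (-w0) (-w2) (-w3) (b p) (a p) (c p) (d p) (by linarith) (by linarith) (by linarith) (by linarith) (by linarith) (hb p) (ha p) (hc p) (hd p) (by linarith [hrel p])) (Ne.symm hab)
  · exact absurd (funext fun p => onePos (-w1) (-w0) (-w2) (-w3) (b p) (a p) (c p) (d p) (by linarith) (by linarith) (by linarith) (by linarith) (by linarith) (hb p) (ha p) (hc p) (hd p) (by linarith [hrel p])) (Ne.symm hab)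
  · exact absurd (funext fun p => onePos w0 w2 w1 w3 (a p) (c p) (b p) (d p) h0 h2 h1.le h3.le (by linarith) (ha p) (hc p) (hb p) (hd p) (by linarith [hrel p])) hac
  · exact absurd (funext fun p => onePos w0 w2 w1 w3 (a p) (c p) (b p) (d p) h0 h2 h1.le h3.le (by linarith) (ha p) (hc p) (hb p) (hd p) (by linarith [hrel p])) hac
  · exact absurd (funext fun p => onePos (-w2) (-w0) (-w1) (-w3) (c p) (a p) (b p) (d p) (by linarith) (by linarith) (by linarith) (by linarith) (by linarith) (hc p) (ha p) (hb p) (hd p) (by linarith [hrel p])) (Ne.symm hac)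
  · exact absurd (funext fun p => onePos w0 w3 w1 w2 (a p) (d p) (b p) (c p) h0 h3 h1.le h2.le (by linarith) (ha p) (hd p) (hb p) (hc p) (by linarith [hrel p])) had
  · exfalso; linarith
  · exfalso; linarith
  · exact absurd (funext fun p => onePos (-w3) (-w0) (-w1) (-w2) (d p) (a p) (b p) (c p) (by linarith) (by linarith) (by linarith) (by linarith) (by linarith) (hd p) (ha p) (hb p) (hc p) (by linarith [hrel p])) (Ne.symm had)
  · exfalso; linarith
  · exfalso; linarith
  · exact Or.inl (fun p => quad w0 w1 w2 w3 (a p) (b p) (c p) (d p) h0 h1 h2 h3 (by linarith) (ha p) (hb p) (hc p) (hd p) (by linarith [hrel p]))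
  · exact absurd (funext fun p => onePos (-w2) (-w0) (-w1) (-w3) (c p) (a p) (b p) (d p) (by linarith) (by linarith) (by linarith) (by linarith) (by linarith) (hc p) (ha p) (hb p) (hd p) (by linarith [hrel p])) (Ne.symm hac)
  · exact absurd (funext fun p => onePos (-w2) (-w0) (-w1) (-w3) (c p) (a p) (b p) (d p) (by linarith) (by linarith) (by linarith) (by linarith) (by linarith) (hc p) (ha p) (hb p) (hd p) (by linarith [hrel p])) (Ne.symm hac)
  · exact absurd (funext fun p => onePos (-w3) (-w0) (-w1) (-w2) (d p) (a p) (b p) (c p) (by linarith) (by linarith) (by linarith) (by linarith) (by linarith) (hd p) (ha p) (hb p) (hc p) (by linarith [hrel p])) (Ne.symm had)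
  · exfalso; linarith
  · exfalso; linarith
  · exact absurd (funext fun p => onePos (-w3) (-w0) (-w1) (-w2) (d p) (a p) (b p) (c p) (by linarith) (by linarith) (by linarith) (by linarith) (by linarith) (hd p) (ha p) (hb p) (hc p) (by linarith [hrel p])) (Ne.symm had)
  · exfalso; linarith
  · exfalso; linarith

lemma sum_to_prop {A B C D : Set P} (h : ∀ p, chi A p + chi B p = chi C p + chi D p) :
    (∀ p, (p ∈ A ∧ p ∈ B) ↔ (p ∈ C ∧ p ∈ D)) ∧
      (∀ p, (p ∈ A ∨ p ∈ B) ↔ (p ∈ C ∨ p ∈ D)) := by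
  constructor <;> intro p <;> have hp := h p <;>
    by_cases h1 : p ∈ A <;> by_cases h2 : p ∈ B <;> by_cases h3 : p ∈ C <;>
      by_cases h4 : p ∈ D <;>
    simp [chi, Set.indicator, h1, h2, h3, h4] at hp ⊢ <;> norm_num at hp

lemma perm_acdb {α : Type*} (a b c d : α) : ({a, c, d, b} : Set α) = {a, b, c, d} := by
  ext x; simp only [Set.mem_insert_iff, Set.mem_singleton_iff]; tauto

lemma perm_bcda {α : Type*} (a b c d : α) : ({b, c, d, a} : Set α) = {a, b, c, d} := by
  ext x; simp only [Set.mem_insert_iff, Set.mem_singleton_iff]; tauto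

lemma perm_cabd {α : Type*} (a b c d : α) : ({c, a, b, d} : Set α) = {a, b, c, d} := by
  ext x; simp only [Set.mem_insert_iff, Set.mem_singleton_iff]; tauto

lemma perm_dabc {α : Type*} (a b c d : α) : ({d, a, b, c} : Set α) = {a, b, c, d} := by
  ext x; simp only [Set.mem_insert_iff, Set.mem_singleton_iff]; tauto

lemma perm_adcb {α : Type*} (a b c d : α) : ({a, d, c, b} : Set α) = {a, b, c, d} := by
  ext x; simp only [Set.mem_insert_iff, Set.mem_singleton_iff]; tauto

lemma perm_acbd {α : Type*} (a b c d : α) : ({a, c, b, d} : Set α) = {a, b, c, d} := by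
  ext x; simp only [Set.mem_insert_iff, Set.mem_singleton_iff]; tauto

lemma perm_adbc {α : Type*} (a b c d : α) : ({a, d, b, c} : Set α) = {a, b, c, d} := by
  ext x; simp only [Set.mem_insert_iff, Set.mem_singleton_iff]; tauto

lemma core (A B C D : Set P)
    (hAB : A ≠ B) (hAC : A ≠ C) (hAD : A ≠ D) (hBC : B ≠ C) (hBD : B ≠ D) (hCD : C ≠ D)
    (h1 : ∀ p, (p ∈ A ∧ p ∈ B) ↔ (p ∈ C ∧ p ∈ D))
    (h2 : ∀ p, (p ∈ A ∨ p ∈ B) ↔ (p ∈ C ∨ p ∈ D)) :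
    ∃ W X Y Z : Set P, ({W, X, Y, Z} : Set (Set P)) = {A, B, C, D} ∧
      ((W ⊆ X ∧ W ⊆ Y ∧ X ⊆ Z ∧ Y ⊆ Z ∧ ¬ X ⊆ Y ∧ ¬ Y ⊆ X) ∨
       (W ⊂ X ∧ Y ⊂ Z ∧ ¬ W ⊆ Y ∧ ¬ Y ⊆ W ∧ ¬ W ⊆ Z ∧ ¬ Z ⊆ W ∧
        ¬ X ⊆ Y ∧ ¬ Y ⊆ X ∧ ¬ X ⊆ Z ∧ ¬ Z ⊆ X) ∨
       (¬ W ⊆ X ∧ ¬ X ⊆ W ∧ ¬ W ⊆ Y ∧ ¬ Y ⊆ W ∧ ¬ W ⊆ Z ∧ ¬ Z ⊆ W ∧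
        ¬ X ⊆ Y ∧ ¬ Y ⊆ X ∧ ¬ X ⊆ Z ∧ ¬ Z ⊆ X ∧ ¬ Y ⊆ Z ∧ ¬ Z ⊆ Y)) := by
  by_cases hab : A ⊆ B
  · refine ⟨A, C, D, B,
      perm_acdb A B C D,
      Or.inl ⟨fun p hp => ((h1 p).mp ⟨hp, hab hp⟩).1,
        fun p hp => ((h1 p).mp ⟨hp, hab hp⟩).2, ?_, ?_, ?_, ?_⟩⟩
    · intro p hp
      rcases (h2 p).mpr (Or.inl hp) with h | h
      exacts [hab h, h]
    · intro p hp
      rcases (h2 p).mpr (Or.inr hp) with h | h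
      exacts [hab h, h]
    · intro hcd
      exact hAC (Set.Subset.antisymm (fun p hp => ((h1 p).mp ⟨hp, hab hp⟩).1)
        (fun p hp => ((h1 p).mpr ⟨hp, hcd hp⟩).1))
    · intro hdc
      exact hAD (Set.Subset.antisymm (fun p hp => ((h1 p).mp ⟨hp, hab hp⟩).2)
        (fun p hp => ((h1 p).mpr ⟨hdc hp, hp⟩).1))
  by_cases hba : B ⊆ A
  · refine ⟨B, C, D, A,
      perm_bcda A B C D,
      Or.inl ⟨fun p hp => ((h1 p).mp ⟨hba hp, hp⟩).1,
        fun p hp => ((h1 p).mp ⟨hba hp, hp⟩).2, ?_, ?_, ?_, ?_⟩⟩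
    · intro p hp
      rcases (h2 p).mpr (Or.inl hp) with h | h
      exacts [h, hba h]
    · intro p hp
      rcases (h2 p).mpr (Or.inr hp) with h | h
      exacts [h, hba h]
    · intro hcd
      exact hBC (Set.Subset.antisymm (fun p hp => ((h1 p).mp ⟨hba hp, hp⟩).1)
        (fun p hp => ((h1 p).mpr ⟨hp, hcd hp⟩).2))
    · intro hdc
      exact hBD (Set.Subset.antisymm (fun p hp => ((h1 p).mp ⟨hba hp, hp⟩).2)
        (fun p hp => ((h1 p).mpr ⟨hdc hp, hp⟩).2))
  by_cases hcd : C ⊆ D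
  · refine ⟨C, A, B, D,
      perm_cabd A B C D,
      Or.inl ⟨fun p hp => ((h1 p).mpr ⟨hp, hcd hp⟩).1,
        fun p hp => ((h1 p).mpr ⟨hp, hcd hp⟩).2, ?_, ?_, ?_, ?_⟩⟩
    · intro p hp
      rcases (h2 p).mp (Or.inl hp) with h | h
      exacts [hcd h, h]
    · intro p hp
      rcases (h2 p).mp (Or.inr hp) with h | h
      exacts [hcd h, h]
    · intro hab'
      exact hAC (Set.Subset.antisymm (fun p hp => ((h1 p).mp ⟨hp, hab' hp⟩).1)
        (fun p hp => ((h1 p).mpr ⟨hp, hcd hp⟩).1))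
    · intro hba'
      exact hBC (Set.Subset.antisymm (fun p hp => ((h1 p).mp ⟨hba' hp, hp⟩).1)
        (fun p hp => ((h1 p).mpr ⟨hp, hcd hp⟩).2))
  by_cases hdc : D ⊆ C
  · refine ⟨D, A, B, C,
      perm_dabc A B C D,
      Or.inl ⟨fun p hp => ((h1 p).mpr ⟨hdc hp, hp⟩).1,
        fun p hp => ((h1 p).mpr ⟨hdc hp, hp⟩).2, ?_, ?_, ?_, ?_⟩⟩
    · intro p hp
      rcases (h2 p).mp (Or.inl hp) with h | h
      exacts [h, hdc h]
    · intro p hp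
      rcases (h2 p).mp (Or.inr hp) with h | h
      exacts [h, hdc h]
    · intro hab'
      exact hAD (Set.Subset.antisymm (fun p hp => ((h1 p).mp ⟨hp, hab' hp⟩).2)
        (fun p hp => ((h1 p).mpr ⟨hdc hp, hp⟩).1))
    · intro hba'
      exact hBD (Set.Subset.antisymm (fun p hp => ((h1 p).mp ⟨hba' hp, hp⟩).2)
        (fun p hp => ((h1 p).mpr ⟨hdc hp, hp⟩).2))
  -- cross implications
  have f56 : C ⊆ B → A ⊆ D := by
    intro h p hp
    rcases (h2 p).mp (Or.inl hp) with hC | hD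
    · exact ((h1 p).mp ⟨hp, h hC⟩).2
    · exact hD
  have f55 : B ⊆ C → D ⊆ A := by
    intro h p hp
    rcases (h2 p).mpr (Or.inr hp) with hA | hB
    · exact hA
    · exact ((h1 p).mpr ⟨h hB, hp⟩).1
  have f58 : D ⊆ B → A ⊆ C := by
    intro h p hp
    rcases (h2 p).mp (Or.inl hp) with hC | hD
    · exact hC
    · exact ((h1 p).mp ⟨hp, h hD⟩).1
  have f57 : B ⊆ D → C ⊆ A := by
    intro h p hp
    rcases (h2 p).mpr (Or.inl hp) with hA | hB
    · exact hA
    · exact ((h1 p).mpr ⟨hp, h hB⟩).1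
  have f1 : A ⊆ C → D ⊆ B := by
    intro h p hp
    rcases (h2 p).mpr (Or.inr hp) with hA | hB
    · exact ((h1 p).mpr ⟨h hA, hp⟩).2
    · exact hB
  have f2 : C ⊆ A → B ⊆ D := by
    intro h p hp
    rcases (h2 p).mp (Or.inr hp) with hC | hD
    · exact ((h1 p).mp ⟨h hC, hp⟩).2
    · exact hD
  have f3 : A ⊆ D → C ⊆ B := by
    intro h p hp
    rcases (h2 p).mpr (Or.inl hp) with hA | hB
    · exact ((h1 p).mpr ⟨hp, h hA⟩).2
    · exact hB
  have f4 : D ⊆ A → B ⊆ C := by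
    intro h p hp
    rcases (h2 p).mp (Or.inr hp) with hC | hD
    · exact hC
    · exact ((h1 p).mp ⟨h hD, hp⟩).1
  by_cases r1 : A ⊆ C
  · have r8 : D ⊆ B := f1 r1
    have nAD : ¬ A ⊆ D := fun h => hab fun p hp => ((h1 p).mpr ⟨r1 hp, h hp⟩).2
    have nDA : ¬ D ⊆ A := fun h => hdc (h.trans r1)
    exact ⟨A, C, D, B,
      perm_acdb A B C D,
      Or.inr (Or.inl ⟨Set.ssubset_iff_subset_ne.mpr ⟨r1, hAC⟩,
        Set.ssubset_iff_subset_ne.mpr ⟨r8, Ne.symm hBD⟩,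
        nAD, nDA, hab, hba, hcd, hdc,
        fun h => nAD (f56 h), fun h => nDA (f55 h)⟩)⟩
  by_cases r2 : C ⊆ A
  · have r7 : B ⊆ D := f2 r2
    have nCB : ¬ C ⊆ B := fun h => hcd fun p hp => ((h1 p).mp ⟨r2 hp, h hp⟩).2
    have nBC : ¬ B ⊆ C := fun h => hba (h.trans r2)
    have nAD : ¬ A ⊆ D := fun h => hcd (r2.trans h)
    have nDA : ¬ D ⊆ A := fun h => hba ((f4 h).trans r2)
    exact ⟨C, A, B, D,
      perm_cabd A B C D,
      Or.inr (Or.inl ⟨Set.ssubset_iff_subset_ne.mpr ⟨r2, Ne.symm hAC⟩,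
        Set.ssubset_iff_subset_ne.mpr ⟨r7, hBD⟩,
        nCB, nBC, hcd, hdc, hab, hba, nAD, nDA⟩)⟩
  by_cases r3 : A ⊆ D
  · have r6 : C ⊆ B := f3 r3
    have nDB : ¬ D ⊆ B := fun h => r1 (f58 h)
    have nBD : ¬ B ⊆ D := fun h => r2 (f57 h)
    exact ⟨A, D, C, B,
      perm_adcb A B C D,
      Or.inr (Or.inl ⟨Set.ssubset_iff_subset_ne.mpr ⟨r3, hAD⟩,
        Set.ssubset_iff_subset_ne.mpr ⟨r6, Ne.symm hBC⟩,
        r1, r2, hab, hba, hdc, hcd, nDB, nBD⟩)⟩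
  by_cases r4 : D ⊆ A
  · have r5 : B ⊆ C := f4 r4
    have nDB : ¬ D ⊆ B := fun h => r1 (f58 h)
    have nBD : ¬ B ⊆ D := fun h => r2 (f57 h)
    exact ⟨D, A, B, C,
      perm_dabc A B C D,
      Or.inr (Or.inl ⟨Set.ssubset_iff_subset_ne.mpr ⟨r4, Ne.symm hAD⟩,
        Set.ssubset_iff_subset_ne.mpr ⟨r5, hBC⟩,
        nDB, nBD, hdc, hcd, hab, hba, r1, r2⟩)⟩
  · have nDB : ¬ D ⊆ B := fun h => r1 (f58 h)
    have nBD : ¬ B ⊆ D := fun h => r2 (f57 h)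
    have nCB : ¬ C ⊆ B := fun h => r3 (f56 h)
    have nBC : ¬ B ⊆ C := fun h => r4 (f55 h)
    exact ⟨A, B, C, D, rfl,
      Or.inr (Or.inr ⟨hab, hba, r1, r2, r3, r4, nBC, nCB, nBD, nDB, hcd, hdc⟩)⟩

end Aux

/-- If `A, B, C, D` are pairwise distinct antichains of a finite poset
`P` and `conv(χ_A, χ_B, χ_C, χ_D)` is a square face of the chain polytope `C(P)`, then
the poset `({A, B, C, D}, ⊆)` is isomorphic to (a) the diamond, (b) the disjoint union
of two 2-element chains, or (c) the 4-element antichain. -/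
theorem statement16 (P : Type) [Fintype P] [PartialOrder P] (A B C D : Set P)
    (hA : IsAntichain (· ≤ ·) A) (hB : IsAntichain (· ≤ ·) B)
    (hC : IsAntichain (· ≤ ·) C) (hD : IsAntichain (· ≤ ·) D)
    (hAB : A ≠ B) (hAC : A ≠ C) (hAD : A ≠ D) (hBC : B ≠ C) (hBD : B ≠ D) (hCD : C ≠ D)
    (hsq : IsSquareFaceOf (chainPolytope P)
      (convexHull ℝ ({chi A, chi B, chi C, chi D} : Set (P → ℝ)))) :
    ∃ W X Y Z : Set P, ({W, X, Y, Z} : Set (Set P)) = {A, B, C, D} ∧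
      ((W ⊆ X ∧ W ⊆ Y ∧ X ⊆ Z ∧ Y ⊆ Z ∧ ¬ X ⊆ Y ∧ ¬ Y ⊆ X) ∨
       (W ⊂ X ∧ Y ⊂ Z ∧ ¬ W ⊆ Y ∧ ¬ Y ⊆ W ∧ ¬ W ⊆ Z ∧ ¬ Z ⊆ W ∧
        ¬ X ⊆ Y ∧ ¬ Y ⊆ X ∧ ¬ X ⊆ Z ∧ ¬ Z ⊆ X) ∨
       (¬ W ⊆ X ∧ ¬ X ⊆ W ∧ ¬ W ⊆ Y ∧ ¬ Y ⊆ W ∧ ¬ W ⊆ Z ∧ ¬ Z ⊆ W ∧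
        ¬ X ⊆ Y ∧ ¬ Y ⊆ X ∧ ¬ X ⊆ Z ∧ ¬ Z ⊆ X ∧ ¬ Y ⊆ Z ∧ ¬ Z ⊆ Y)) := by
    classical
  have hab' : chi A ≠ chi B := fun h => hAB (chi_inj h)
  have hac' : chi A ≠ chi C := fun h => hAC (chi_inj h)
  have had' : chi A ≠ chi D := fun h => hAD (chi_inj h)
  have hbc' : chi B ≠ chi C := fun h => hBC (chi_inj h)
  have hbd' : chi B ≠ chi D := fun h => hBD (chi_inj h)
  have hcd' : chi C ≠ chi D := fun h => hCD (chi_inj h)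
  obtain ⟨hface, hdim, hcard⟩ := hsq
  set f : Fin 4 → (P → ℝ) := ![chi A, chi B, chi C, chi D] with hf
  have hrange : Set.range f = ({chi A, chi B, chi C, chi D} : Set (P → ℝ)) := by
    ext x
    simp only [hf, Matrix.range_cons, Matrix.range_empty, Set.union_empty,
      Set.singleton_union, Set.mem_insert_iff, Set.mem_singleton_iff]
  have hdim2 : Module.finrank ℝ
      (vectorSpan ℝ ({chi A, chi B, chi C, chi D} : Set (P → ℝ))) = 2 := by
    have h := hdim
    unfold sdim at h
    rwa [← direction_affineSpan, affineSpan_convexHull, direction_affineSpan] at h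
  have hni : ¬ AffineIndependent ℝ f := by
    intro h
    have h3 := h.finrank_vectorSpan (by simp : Fintype.card (Fin 4) = 3 + 1)
    rw [hrange] at h3
    rw [h3] at hdim2
    omega
  rw [affineIndependent_iff] at hni
  push_neg at hni
  obtain ⟨t, w, hw0, hwsum, i, hit, hwi⟩ := hni
  set w' : Fin 4 → ℝ := fun j => if j ∈ t then w j else 0 with hw'
  have hsum' : w' 0 + w' 1 + w' 2 + w' 3 = 0 := by
    have hsplit : ∑ j : Fin 4, w' j = 0 := by
      rw [hw']
      rw [Finset.sum_ite_mem]
      simpa [Finset.univ_inter] using hw0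
    simpa [Fin.sum_univ_four] using hsplit
  have hcombine : ∀ p, w' 0 * chi A p + w' 1 * chi B p + w' 2 * chi C p
      + w' 3 * chi D p = 0 := by
    intro p
    have h0 : ∑ j : Fin 4, w' j • f j = 0 := by
      rw [hw']
      simp only [ite_smul, zero_smul]
      rw [Finset.sum_ite_mem]
      simpa [Finset.univ_inter] using hwsum
    have := congrFun h0 p
    simpa [Fin.sum_univ_four, hf, mul_comm] using this
  have hne' : ¬ (w' 0 = 0 ∧ w' 1 = 0 ∧ w' 2 = 0 ∧ w' 3 = 0) := by
    rintro ⟨e0, e1, e2, e3⟩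
    apply hwi
    have hwiw : w' i = w i := by simp [hw', hit]
    fin_cases i <;> simp_all
  have key := mega (chi A) (chi B) (chi C) (chi D) (chi01 A) (chi01 B) (chi01 C) (chi01 D)
    hab' hac' had' hbc' hbd' hcd' (w' 0) (w' 1) (w' 2) (w' 3) hsum' hne' hcombine
  rcases key with h | h | h
  · obtain ⟨hp1, hp2⟩ := sum_to_prop h
    exact core A B C D hAB hAC hAD hBC hBD hCD hp1 hp2
  · obtain ⟨hp1, hp2⟩ := sum_to_prop h
    obtain ⟨W, X, Y, Z, hperm, hcase⟩ :=
      core A C B D hAC hAB hAD (Ne.symm hBC) hCD hBD hp1 hp2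
    exact ⟨W, X, Y, Z, hperm.trans (perm_acbd A B C D), hcase⟩
  · obtain ⟨hp1, hp2⟩ := sum_to_prop h
    obtain ⟨W, X, Y, Z, hperm, hcase⟩ :=
      core A D B C hAD hAB hAC (Ne.symm hBD) (Ne.symm hCD) hBC hp1 hp2
    exact ⟨W, X, Y, Z, hperm.trans (perm_adbc A B C D), hcase⟩
end
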